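/- arXiv:2605.27490 — 3 statements merged into one kernel-verified Lean document; each statement's English description precedes it below -/
import Mathlib

section
/- Let T be a finite tree of pathwidth k ≥ 1, let P be a k-spine of T, let t ∈ V(T) be the target, let s ∈ V(T), and let a be the vertex of V(P) closest in T to s. Then exponential (doubling binary) search along P starting from a, using the answers of the direction oracle dir_t restricted to queries on P, makes at most C · log₂(dist_T(s,t) + 2) queries for a universal constant C, and either queries t itself, or terminates at the unique vertex x ∈ V(P) with dir_t(x) ∉ V(P); in the latter case t lies in the connected component of T − V(P) containing dir_t(x), and this component has pathwidth at most k − 1. -/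
open SimpleGraph

/-- The direction oracle: when the target is `t` and we query `v`, the oracle
returns `none` (meaning "here") if `v = t`, and otherwise returns `some u` where
`u` is the unique neighbor of `v` on the path from `v` to `t` (i.e. the neighbor
strictly closer to `t`). -/
noncomputable def dirO {V : Type} (T : SimpleGraph V) (t v : V) : Option V :=
  letI : Decidable (∃ u, T.Adj v u ∧ T.dist u t + 1 = T.dist v t) := Classical.dec _
  if h : ∃ u, T.Adj v u ∧ T.dist u t + 1 = T.dist v t then some h.choose else none

/-- A deterministic search strategy: chooses the next vertex to query as a
function of the history of (query, oracle answer) pairs so far. -/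
def Strategy (V : Type) := List (V × Option V) → V

/-- The history of the first `n` queries and answers when running strategy `σ`
against target `t` in tree `T`. -/
noncomputable def histRun {V : Type} (T : SimpleGraph V) (σ : Strategy V) (t : V) :
    ℕ → List (V × Option V)
  | 0 => []
  | n + 1 =>
      histRun T σ t n ++ [(σ (histRun T σ t n), dirO T t (σ (histRun T σ t n)))]

/-- The `n`-th query (0-indexed) made by strategy `σ` against target `t`. -/
noncomputable def queryAt {V : Type} (T : SimpleGraph V) (σ : Strategy V) (t : V) (n : ℕ) : V :=
  σ (histRun T σ t n)

/-- The query cost of strategy `σ` on target `t`: the number of queries made up to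
and including the first query of `t` itself. -/
noncomputable def costOf {V : Type} (T : SimpleGraph V) (σ : Strategy V) (t : V) : ℕ :=
  sInf {n | queryAt T σ t n = t} + 1

/-- A strategy is correct on a target set `S` if for every target in `S` it
eventually queries the target. -/
def CorrectOn {V : Type} (T : SimpleGraph V) (σ : Strategy V) (S : Set V) : Prop :=
  ∀ t ∈ S, ∃ n, queryAt T σ t n = t

/-- A path decomposition of a graph. -/
structure PathDecomp {V : Type} (G : SimpleGraph V) where
  m : ℕ
  bags : Fin m → Finset V
  cover : ∀ v, ∃ i, v ∈ bags i
  edgeCover : ∀ ⦃u v⦄, G.Adj u v → ∃ i, u ∈ bags i ∧ v ∈ bags i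
  interval : ∀ (v : V) (i j k : Fin m), i ≤ j → j ≤ k → v ∈ bags i → v ∈ bags k → v ∈ bags j

/-- The pathwidth of a graph: the least `w` such that there is a path
decomposition all of whose bags have at most `w + 1` vertices. -/
noncomputable def pathwidth {V : Type} (G : SimpleGraph V) : ℕ :=
  sInf { w | ∃ D : PathDecomp G, ∀ i, (D.bags i).card ≤ w + 1 }

/-- The vertex set of the connected component of `y` in `G − S` (the graph with
the vertex set `S` deleted): all vertices reachable from `y` by a walk avoiding `S`. -/
def compSet {V : Type} (G : SimpleGraph V) (S : Set V) (y : V) : Set V :=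
  {z | ∃ w : G.Walk y z, ∀ v ∈ w.support, v ∉ S}

section
variable {V : Type} {T : SimpleGraph V}

lemma getVert_mem_support' {u v : V} (p : T.Walk u v) (i : ℕ) : p.getVert i ∈ p.support := by
  rcases le_or_gt p.length i with h | h
  · rw [p.getVert_of_length_le h]; exact p.end_mem_support
  · exact Walk.mem_support_iff_exists_getVert.mpr ⟨i, rfl, h.le⟩

lemma getVert_injOn' {u v : V} (p : T.Walk u v) :
    p.IsPath → ∀ i, i ≤ p.length → ∀ j, j ≤ p.length → p.getVert i = p.getVert j → i = j := by
  induction p with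
  | nil => intro _ i hi j hj _; simp only [Walk.length_nil, Nat.le_zero] at hi hj; omega
  | cons h q ih =>
    intro hp i hi j hj hij
    rw [Walk.cons_isPath_iff] at hp
    simp only [Walk.length_cons] at hi hj
    match i, j with
    | 0, 0 => rfl
    | 0, j+1 =>
      exfalso; apply hp.2
      rw [Walk.getVert_zero, Walk.getVert_cons_succ] at hij
      rw [hij]; exact getVert_mem_support' q j
    | i+1, 0 =>
      exfalso; apply hp.2
      rw [Walk.getVert_zero, Walk.getVert_cons_succ] at hij
      rw [← hij]; exact getVert_mem_support' q i
    | i+1, j+1 =>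
      rw [Walk.getVert_cons_succ, Walk.getVert_cons_succ] at hij
      have := ih hp.1 i (by omega) j (by omega) hij; omega

lemma path_length_eq_dist (hT : T.IsTree) {x y : V} (q : T.Walk x y) (hq : q.IsPath) :
    q.length = T.dist x y := by
  classical
  obtain ⟨w, hw⟩ := hT.isConnected.exists_walk_length_eq_dist x y
  have hwp : w.bypass.IsPath := Walk.bypass_isPath w
  have hlen : w.bypass.length = T.dist x y :=
    le_antisymm ((Walk.length_bypass_le w).trans hw.le) (SimpleGraph.dist_le _)
  have : q = w.bypass := ((hT.existsUnique_path x y).unique hq hwp)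
  rw [this, hlen]
variable {V : Type} {T : SimpleGraph V}

lemma dist_split' (hT : T.IsTree) {x y z : V} (w : T.Walk x y) (hw : w.length = T.dist x y)
    (hz : z ∈ w.support) : T.dist x z + T.dist z y = T.dist x y := by
  classical
  have hsplit := w.take_spec hz
  have h1 : T.dist x z ≤ (w.takeUntil z hz).length := SimpleGraph.dist_le _
  have h2 : T.dist z y ≤ (w.dropUntil z hz).length := SimpleGraph.dist_le _
  have hlen : (w.takeUntil z hz).length + (w.dropUntil z hz).length = w.length := by
    rw [← Walk.length_append, hsplit]
  have htri : T.dist x y ≤ T.dist x z + T.dist z y :=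
    hT.isConnected.dist_triangle
  omega

lemma closer_exists (hT : T.IsTree) {v t : V} (hne : v ≠ t) :
    ∃ u, T.Adj v u ∧ T.dist u t + 1 = T.dist v t := by
  obtain ⟨w, hw⟩ := hT.isConnected.exists_walk_length_eq_dist v t
  have hd : 0 < T.dist v t := hT.isConnected.pos_dist_of_ne hne
  cases w with
  | nil => exact absurd rfl hne
  | @cons _ b _ hadj w' =>
    refine ⟨b, hadj, ?_⟩
    simp only [Walk.length_cons] at hw
    have h1 : T.dist b t ≤ w'.length := SimpleGraph.dist_le _
    have h2 : T.dist v t ≤ T.dist v b + T.dist b t := hT.isConnected.dist_triangle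
    have h3 : T.dist v b ≤ 1 := by
      have := SimpleGraph.dist_le (Walk.cons hadj Walk.nil : T.Walk v b)
      simpa using this
    omega

lemma closer_unique (hT : T.IsTree) {v t u₁ u₂ : V}
    (h1 : T.Adj v u₁) (hd1 : T.dist u₁ t + 1 = T.dist v t)
    (h2 : T.Adj v u₂) (hd2 : T.dist u₂ t + 1 = T.dist v t) : u₁ = u₂ := by
  classical
  have key : ∀ (u : V), T.Adj v u → T.dist u t + 1 = T.dist v t →
      ∃ W : T.Walk v t, W.IsPath ∧ W.getVert 1 = u := by
    intro u hadj hd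
    obtain ⟨w, hw⟩ := hT.isConnected.exists_walk_length_eq_dist u t
    have hwp : w.bypass.IsPath := Walk.bypass_isPath w
    have hlen : w.bypass.length = T.dist u t :=
      le_antisymm ((Walk.length_bypass_le w).trans hw.le) (SimpleGraph.dist_le _)
    have hv : v ∉ w.bypass.support := by
      intro hv
      have := dist_split' hT w.bypass hlen hv
      have hvu : 0 < T.dist u v := hT.isConnected.pos_dist_of_ne (fun h => by
        subst h; exact (T.irrefl hadj))
      omega
    refine ⟨Walk.cons hadj w.bypass, ?_, ?_⟩
    · rw [Walk.cons_isPath_iff]; exact ⟨hwp, hv⟩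
    · exact (Walk.getVert_cons_succ (n := 0) _ hadj).trans (Walk.getVert_zero _)
  obtain ⟨W1, hW1, hg1⟩ := key u₁ h1 hd1
  obtain ⟨W2, hW2, hg2⟩ := key u₂ h2 hd2
  have : W1 = W2 := (hT.existsUnique_path v t).unique hW1 hW2
  rw [← hg1, ← hg2, this]

lemma dirO_eq_some_iff (hT : T.IsTree) {t v u : V}
    (hadj : T.Adj v u) (hd : T.dist u t + 1 = T.dist v t) : dirO T t v = some u := by
  have hex : ∃ x, T.Adj v x ∧ T.dist x t + 1 = T.dist v t := ⟨u, hadj, hd⟩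
  unfold dirO
  rw [dif_pos hex]
  exact congrArg some (closer_unique hT hex.choose_spec.1 hex.choose_spec.2 hadj hd)

lemma dirO_spec (hT : T.IsTree) {t v : V} (hne : v ≠ t) :
    ∃ z, dirO T t v = some z ∧ T.Adj v z ∧ T.dist z t + 1 = T.dist v t := by
  obtain ⟨u, hadj, hd⟩ := closer_exists hT hne
  exact ⟨u, dirO_eq_some_iff hT hadj hd, hadj, hd⟩

lemma adj_dist_pm (hT : T.IsTree) {x y : V} (h : T.Adj x y) (t : V) :
    T.dist x t + 1 = T.dist y t ∨ T.dist y t + 1 = T.dist x t := by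
  classical
  obtain ⟨w, hw⟩ := hT.isConnected.exists_walk_length_eq_dist y t
  have hwp : w.bypass.IsPath := Walk.bypass_isPath w
  have hlen : w.bypass.length = T.dist y t :=
    le_antisymm ((Walk.length_bypass_le w).trans hw.le) (SimpleGraph.dist_le _)
  by_cases hx : x ∈ w.bypass.support
  · left
    have hsp := dist_split' hT w.bypass hlen hx
    have hyx : T.dist y x ≤ 1 := by
      have := SimpleGraph.dist_le (Walk.cons h.symm Walk.nil : T.Walk y x)
      simpa using this
    have hyx' : 0 < T.dist y x := hT.isConnected.pos_dist_of_ne (fun hh => by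
      subst hh; exact (T.irrefl h))
    omega
  · right
    have hP : (Walk.cons h w.bypass).IsPath := by
      rw [Walk.cons_isPath_iff]; exact ⟨hwp, hx⟩
    have := path_length_eq_dist hT _ hP
    simp only [Walk.length_cons, hlen] at this
    omega

lemma spine_formula (hT : T.IsTree) {u w : V} (p : T.Walk u w) (hp : p.IsPath) (t : V) :
    ∃ i, i ≤ p.length ∧ ∀ j, j ≤ p.length →
      T.dist (p.getVert j) t = (max i j - min i j) + T.dist (p.getVert i) t := by
  set L := p.length with hL
  set D : ℕ → ℕ := fun j => T.dist (p.getVert j) t with hD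
  have hstep : ∀ j, j < L → (D j + 1 = D (j+1) ∨ D (j+1) + 1 = D j) := by
    intro j hj
    have hadj := p.adj_getVert_succ hj
    rcases adj_dist_pm hT hadj t with h | h
    · exact Or.inl h
    · exact Or.inr h
  have hnoval : ∀ j, 1 ≤ j → j + 1 ≤ L →
      ¬(D (j-1) + 1 = D j ∧ D (j+1) + 1 = D j) := by
    rintro j hj1 hjL ⟨hl, hr⟩
    have hadj1 : T.Adj (p.getVert j) (p.getVert (j-1)) := by
      have h2 := p.adj_getVert_succ (i := j - 1) (by omega)
      have hjj : j - 1 + 1 = j := by omega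
      rw [hjj] at h2; exact h2.symm
    have hadj2 : T.Adj (p.getVert j) (p.getVert (j+1)) := p.adj_getVert_succ (by omega)
    have heq := closer_unique hT hadj1 hl hadj2 hr
    have := getVert_injOn' p hp (j-1) (by omega) (j+1) (by omega) heq
    omega
  obtain ⟨i, hiL, himin⟩ : ∃ i, i ≤ L ∧ ∀ j, j ≤ L → D i ≤ D j := by
    obtain ⟨i, hi, hmin⟩ := Finset.exists_min_image (Finset.range (L+1)) D ⟨0, by simp⟩
    exact ⟨i, by have := Finset.mem_range.mp hi; omega, fun j hj => hmin j (Finset.mem_range.mpr (by omega))⟩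
  refine ⟨i, hiL, ?_⟩
  have up : ∀ o, i + o ≤ L → D (i + o) = o + D i := by
    intro o
    induction o using Nat.strong_induction_on with
    | _ o ih =>
      intro hoL
      match o with
      | 0 => simp
      | 1 =>
        rcases hstep i (by omega) with h | h
        · omega
        · have := himin (i+1) (by omega); omega
      | (o+2) =>
        have h1 := ih (o+1) (by omega) (by omega)
        have h0 := ih o (by omega) (by omega)
        rcases hstep (i+o+1) (by omega) with h | h
        · rw (occs := .pos [1]) [show i + (o+2) = (i+o+1)+1 by omega]
          rw [show i + (o+1) = i+o+1 by omega] at h1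
          omega
        · exfalso
          apply hnoval (i+o+1) (by omega) (by omega)
          rw [show i + (o+1) = i+o+1 by omega] at h1
          rw [show i+o+1-1 = i + o by omega, show i+o+1+1 = i + (o+2) by omega]
          rw [show i+o+1+1 = i + (o+2) by omega] at h
          omega
  have down : ∀ o, o ≤ i → D (i - o) = o + D i := by
    intro o
    induction o using Nat.strong_induction_on with
    | _ o ih =>
      intro hoi
      match o with
      | 0 => simp
      | 1 =>
        rcases hstep (i-1) (by omega) with h | h
        · rw [show i - 1 + 1 = i by omega] at h
          have := himin (i-1) (by omega); omega
        · rw [show i - 1 + 1 = i by omega] at h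
          omega
      | (o+2) =>
        have h1 := ih (o+1) (by omega) (by omega)
        have h0 := ih o (by omega) (by omega)
        rcases hstep (i-o-2) (by omega) with h | h
        · exfalso
          apply hnoval (i-(o+1)) (by omega) (by omega)
          rw [show i-(o+1)-1 = i - o - 2 by omega, show i-(o+1)+1 = i - o by omega]
          rw [show i-o-2+1 = i-(o+1) by omega] at h
          omega
        · rw [show i-o-2+1 = i-(o+1) by omega] at h
          rw [show i - (o+2) = i - o - 2 by omega]
          omega
  intro j hjL
  rcases le_or_gt i j with hij | hij
  · have := up (j - i) (by omega)
    rw [show i + (j-i) = j by omega] at this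
    have hmm : max i j - min i j = j - i := by omega
    simp only [hD] at this ⊢; rw [hmm]; omega
  · have := down (i - j) (by omega)
    rw [show i - (i-j) = j by omega] at this
    have hmm : max i j - min i j = i - j := by omega
    simp only [hD] at this ⊢; rw [hmm]; omega

lemma getVert_dist (hT : T.IsTree) {u w : V} (p : T.Walk u w) (hp : p.IsPath) :
    ∀ i, i ≤ p.length → ∀ j, j ≤ p.length →
      T.dist (p.getVert i) (p.getVert j) = max i j - min i j := by
  intro i hi j hj
  obtain ⟨c, hcL, Phi⟩ := spine_formula hT p hp (p.getVert j)
  have h0 := Phi j hj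
  rw [SimpleGraph.dist_self] at h0
  have hcj : c = j := by omega
  subst hcj
  have h1 := Phi i hi
  rw [SimpleGraph.dist_self] at h1
  omega
end

/-- State of the exponential search automaton. -/
inductive ExpState : Type where
  | start : ExpState
  | dup : Bool → ℕ → ExpState
  | bin : ℕ → ℕ → ExpState
  | halt : ExpState

/-- Index queried in a given state. -/
def stepIdx (i0 L : ℕ) : ExpState → ℕ
  | .start => i0
  | .dup true k => min (i0 + 2^k) L
  | .dup false k => i0 - 2^k
  | .bin lo hi => (lo + hi)/2
  | .halt => i0

/-- Transition function of the exponential search automaton. -/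
noncomputable def transA {V : Type} (f : ℕ → V) (i0 L : ℕ) (s : ExpState) (o : Option V) :
    ExpState :=
  letI := Classical.decEq V
  match o with
  | none => .halt
  | some x =>
    match s with
    | .start =>
        if i0 < L ∧ x = f (i0+1) then .dup true 0
        else if 0 < i0 ∧ x = f (i0-1) then .dup false 0 else .halt
    | .dup true k =>
        if min (i0 + 2^k) L < L ∧ x = f (min (i0 + 2^k) L + 1) then .dup true (k+1)
        else if 0 < min (i0 + 2^k) L ∧ x = f (min (i0 + 2^k) L - 1) then
          .bin (i0 + 2^k/2) (min (i0 + 2^k) L)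
        else .halt
    | .dup false k =>
        if i0 - 2^k < L ∧ x = f (i0 - 2^k + 1) then .bin (i0 - 2^k) (i0 - 2^k/2)
        else if 0 < i0 - 2^k ∧ x = f (i0 - 2^k - 1) then .dup false (k+1)
        else .halt
    | .bin lo hi =>
        if (lo + hi)/2 < L ∧ x = f ((lo + hi)/2 + 1) then .bin ((lo + hi)/2) hi
        else if 0 < (lo + hi)/2 ∧ x = f ((lo + hi)/2 - 1) then .bin lo ((lo + hi)/2)
        else .halt
    | .halt => .halt
/-- Let `T` be a finite tree of pathwidth `k ≥ 1`, let `P` be a `k`-spine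
of `T` (a path such that every connected component of `T − V(P)` has pathwidth at most
`k − 1`), let `s ∈ V(T)` and let `a` be the vertex of `V(P)` closest to `s`.  Then there
is a strategy — exponential (doubling binary) search along `P` starting from `a`, which
queries only vertices of `P` — such that for every target `t`, within
`C * log₂(dist_T(s,t) + 2)` queries (for a universal constant `C`) it either queries `t`
itself, or queries the unique vertex `x ∈ V(P)` with `dir_t(x) ∉ V(P)`; in the latter
case `t` lies in the connected component of `T − V(P)` containing `dir_t(x)`, and this
component has pathwidth at most `k − 1`. -/
theorem spine_phase_exponential_search :
    ∃ C : ℕ, ∀ (V : Type) [Fintype V] (T : SimpleGraph V), T.IsTree →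
      1 ≤ pathwidth T →
      ∀ (u w : V) (p : T.Walk u w), p.IsPath →
      (∀ y : V, y ∉ p.support →
        pathwidth (SimpleGraph.induce (compSet T {v | v ∈ p.support} y) T) ≤
          pathwidth T - 1) →
      ∀ s a : V, a ∈ p.support → (∀ b ∈ p.support, T.dist a s ≤ T.dist b s) →
      ∃ σ : Strategy V, ∀ t : V,
        queryAt T σ t 0 = a ∧
        (∀ n : ℕ, queryAt T σ t n ∈ p.support) ∧
        ∃ n : ℕ, n + 1 ≤ C * Nat.log 2 (T.dist s t + 2) ∧
          (queryAt T σ t n = t ∨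
            ∃ z : V, dirO T t (queryAt T σ t n) = some z ∧ z ∉ p.support ∧
              (∀ x' ∈ p.support,
                (∃ z' : V, dirO T t x' = some z' ∧ z' ∉ p.support) →
                  x' = queryAt T σ t n) ∧
              t ∈ compSet T {v | v ∈ p.support} z ∧
              pathwidth (SimpleGraph.induce (compSet T {v | v ∈ p.support} z) T) ≤
                pathwidth T - 1) := by
  classical
  refine ⟨11, ?_⟩
  intro V _inst T hT hpw u w p hp hspine s a ha hclose
  have hconn : T.Connected := hT.isConnected
  have hinj := getVert_injOn' p hp
  obtain ⟨i0, hfi0, hi0L⟩ := Walk.mem_support_iff_exists_getVert.mp ha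
  set σ : Strategy V := fun h =>
    p.getVert (stepIdx i0 p.length
      ((h.map Prod.snd).foldl (transA p.getVert i0 p.length) ExpState.start)) with hσdef
  refine ⟨σ, ?_⟩
  intro t
  set st : ℕ → ExpState := fun n =>
    ((histRun T σ t n).map Prod.snd).foldl (transA p.getVert i0 p.length) ExpState.start
    with hstdef
  have hqn : ∀ n, queryAt T σ t n = p.getVert (stepIdx i0 p.length (st n)) := by
    intro n
    show σ (histRun T σ t n) = _
    rw [hσdef, hstdef]
  have hst0 : st 0 = ExpState.start := by rw [hstdef]; simp [histRun]
  have hstS : ∀ n, st (n+1) =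
      transA p.getVert i0 p.length (st n) (dirO T t (queryAt T σ t n)) := by
    intro n
    rw [hstdef]
    simp only [histRun, List.map_append, List.foldl_append, List.map_cons, List.map_nil,
      List.foldl_cons, List.foldl_nil]
    rfl
  obtain ⟨istar, histL, Phi⟩ := spine_formula hT p hp t
  -- the spine answers
  have hA1 : ∀ m, m < istar → dirO T t (p.getVert m) = some (p.getVert (m+1)) := by
    intro m hm
    have hadj := p.adj_getVert_succ (i := m) (by omega)
    apply dirO_eq_some_iff hT hadj
    have h1 := Phi (m+1) (by omega)
    have h2 := Phi m (by omega)
    omega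
  have hA2 : ∀ m, istar < m → m ≤ p.length → dirO T t (p.getVert m) = some (p.getVert (m-1)) := by
    intro m hm hmL
    have hadj := p.adj_getVert_succ (i := m-1) (by omega)
    rw [show m - 1 + 1 = m by omega] at hadj
    apply dirO_eq_some_iff hT hadj.symm
    have h1 := Phi (m-1) (by omega)
    have h2 := Phi m (by omega)
    omega
  set Succ : ℕ → Prop := fun n =>
    (queryAt T σ t n = t ∨
      ∃ z : V, dirO T t (queryAt T σ t n) = some z ∧ z ∉ p.support ∧
        (∀ x' ∈ p.support,
          (∃ z' : V, dirO T t x' = some z' ∧ z' ∉ p.support) →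
            x' = queryAt T σ t n) ∧
        t ∈ compSet T {v | v ∈ p.support} z ∧
        pathwidth (SimpleGraph.induce (compSet T {v | v ∈ p.support} z) T) ≤
          pathwidth T - 1) with hSuccdef
  have hFound : ∀ n, stepIdx i0 p.length (st n) = istar → Succ n := by
    intro n hn
    have hq : queryAt T σ t n = p.getVert istar := by rw [hqn n, hn]
    rw [hSuccdef]
    by_cases ht : p.getVert istar = t
    · left; rw [hq, ht]
    · right
      obtain ⟨z, hdz, hadjz, hdistz⟩ := dirO_spec hT ht
      have hzns : z ∉ p.support := by
        intro hzmem
        obtain ⟨j, hjz, hjL⟩ := Walk.mem_support_iff_exists_getVert.mp hzmem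
        have hPh := Phi j hjL
        rw [hjz] at hPh
        omega
      refine ⟨z, by rw [hq]; exact hdz, hzns, ?_, ?_, hspine z hzns⟩
      · rintro x' hx' ⟨z', hz', hz'ns⟩
        obtain ⟨j, hjx, hjL⟩ := Walk.mem_support_iff_exists_getVert.mp hx'
        rcases lt_trichotomy j istar with hj | hj | hj
        · exfalso
          rw [← hjx, hA1 j hj] at hz'
          have : z' = p.getVert (j+1) := by injection hz'.symm
          exact hz'ns (this ▸ getVert_mem_support' p (j+1))
        · rw [hq, ← hjx, hj]
        · exfalso
          rw [← hjx, hA2 j hj hjL] at hz'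
          have : z' = p.getVert (j-1) := by injection hz'.symm
          exact hz'ns (this ▸ getVert_mem_support' p (j-1))
      · obtain ⟨wzt, hwzt⟩ := hconn.exists_walk_length_eq_dist z t
        refine ⟨wzt, ?_⟩
        intro x hx hxmem
        simp only [Set.mem_setOf_eq] at hxmem
        obtain ⟨j, hjx, hjL⟩ := Walk.mem_support_iff_exists_getVert.mp hxmem
        have hsplit := dist_split' hT wzt hwzt hx
        have hPh := Phi j hjL
        rw [hjx] at hPh
        omega
  -- transition lemmas
  have hstep_right : ∀ n s', st n = s' →
      stepIdx i0 p.length s' < istar →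
      st (n+1) = (match s' with
        | ExpState.start => ExpState.dup true 0
        | ExpState.dup true k => ExpState.dup true (k+1)
        | ExpState.dup false k => ExpState.bin (i0 - 2^k) (i0 - 2^k/2)
        | ExpState.bin lo hi => ExpState.bin ((lo+hi)/2) hi
        | ExpState.halt => ExpState.halt) := by
    intro n s' hsn hlt
    have hmL : stepIdx i0 p.length s' < p.length := by omega
    have hans : dirO T t (queryAt T σ t n) =
        some (p.getVert (stepIdx i0 p.length s' + 1)) := by
      rw [hqn n, hsn]; exact hA1 _ hlt
    rw [hstS n, hsn, hans]
    cases s' with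
    | start =>
      simp only [stepIdx] at hmL ⊢
      simp only [transA]
      rw [if_pos ⟨hmL, trivial⟩]
    | dup b k =>
      cases b with
      | true =>
        simp only [stepIdx] at hmL ⊢
        simp only [transA]
        rw [if_pos ⟨hmL, trivial⟩]
      | false =>
        simp only [stepIdx] at hmL ⊢
        simp only [transA]
        rw [if_pos ⟨hmL, trivial⟩]
    | bin lo hi =>
      simp only [stepIdx] at hmL ⊢
      simp only [transA]
      rw [if_pos ⟨hmL, trivial⟩]
    | halt => simp only [transA]
  have hstep_left : ∀ n s', st n = s' →
      istar < stepIdx i0 p.length s' → stepIdx i0 p.length s' ≤ p.length →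
      st (n+1) = (match s' with
        | ExpState.start => ExpState.dup false 0
        | ExpState.dup true k => ExpState.bin (i0 + 2^k/2) (min (i0 + 2^k) p.length)
        | ExpState.dup false k => ExpState.dup false (k+1)
        | ExpState.bin lo hi => ExpState.bin lo ((lo+hi)/2)
        | ExpState.halt => ExpState.halt) := by
    intro n s' hsn hgt hmL
    have hm1 : 0 < stepIdx i0 p.length s' := by omega
    have hans : dirO T t (queryAt T σ t n) =
        some (p.getVert (stepIdx i0 p.length s' - 1)) := by
      rw [hqn n, hsn]; exact hA2 _ hgt hmL
    have hneg : ¬(stepIdx i0 p.length s' < p.length ∧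
        p.getVert (stepIdx i0 p.length s' - 1) = p.getVert (stepIdx i0 p.length s' + 1)) := by
      rintro ⟨hl, he⟩
      have := hinj _ (by omega) _ (by omega) he
      omega
    rw [hstS n, hsn, hans]
    cases s' with
    | start =>
      simp only [stepIdx] at hneg hm1 ⊢
      simp only [transA]
      rw [if_neg hneg, if_pos ⟨hm1, trivial⟩]
    | dup b k =>
      cases b with
      | true =>
        simp only [stepIdx] at hneg hm1 ⊢
        simp only [transA]
        rw [if_neg hneg, if_pos ⟨hm1, trivial⟩]
      | false =>
        simp only [stepIdx] at hneg hm1 ⊢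
        simp only [transA]
        rw [if_neg hneg, if_pos ⟨hm1, trivial⟩]
    | bin lo hi =>
      simp only [stepIdx] at hneg hm1 ⊢
      simp only [transA]
      rw [if_neg hneg, if_pos ⟨hm1, trivial⟩]
    | halt => simp only [transA]
  -- binary search phase
  have hBIN : ∀ j lo hi n, st n = ExpState.bin lo hi → lo < istar → istar < hi →
      hi ≤ p.length → hi - lo ≤ 2^j + 1 → ∃ n', n' ≤ n + j ∧ Succ n' := by
    intro j
    induction j with
    | zero =>
      intro lo hi n hsn h1 h2 h3 h4
      have hm : (lo + hi)/2 = istar := by simp only [pow_zero] at h4; omega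
      exact ⟨n, le_refl _, hFound n (by rw [hsn]; simpa [stepIdx] using hm)⟩
    | succ j ih =>
      intro lo hi n hsn h1 h2 h3 h4
      have hp2 : 2^(j+1) = 2 * 2^j := by rw [pow_succ]; ring
      have hj0 : 0 < 2^j := pow_pos (by norm_num) j
      rcases lt_trichotomy ((lo+hi)/2) istar with hlt | heq | hgt
      · have hnext := hstep_right n _ hsn hlt
        obtain ⟨n', hn', hS⟩ := ih ((lo+hi)/2) hi (n+1) hnext hlt h2 h3 (by omega)
        exact ⟨n', by omega, hS⟩
      · exact ⟨n, by omega, hFound n (by rw [hsn]; simpa [stepIdx] using heq)⟩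
      · have hnext := hstep_left n _ hsn hgt (by simp only [stepIdx]; omega)
        obtain ⟨n', hn', hS⟩ := ih lo ((lo+hi)/2) (n+1) hnext h1 hgt (by omega) (by omega)
        exact ⟨n', by omega, hS⟩
  -- doubling phase
  have hDBL : ∀ r k dir n, st n = ExpState.dup dir k →
      (dir = true → i0 + 2^k/2 < istar) → (dir = false → istar + 2^k/2 < i0) →
      2*(max i0 istar - min i0 istar) + 2 ≤ 2^(k+r) →
      ∃ n', n' ≤ n + 2*r + k + 1 ∧ Succ n' := by
    intro r
    induction r with
    | zero =>
      intro k dir n hsn hIT hIF hbound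
      exfalso
      simp only [Nat.add_zero] at hbound
      have hk0 : 0 < 2^k := pow_pos (by norm_num) k
      cases dir
      · have hIv := hIF rfl; omega
      · have hIv := hIT rfl; omega
    | succ r ih =>
      intro k dir n hsn hIT hIF hbound
      have hkr : 2^(k+(r+1)) = 2^(k+1+r) := by rw [show k+(r+1) = k+1+r by omega]
      have hk0 : 0 < 2^k := pow_pos (by norm_num) k
      have hk1 : 0 < 2^(k-1) := pow_pos (by norm_num) (k-1)
      have hks : 2^(k+1) = 2 * 2^k := by rw [pow_succ]; ring
      have hw : 2^k - 2^k/2 ≤ 2^(k-1) + 1 := by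
        rcases Nat.eq_zero_or_pos k with rfl | hk
        · simp
        · have : 2^k = 2 * 2^(k-1) := by
            rw [← pow_succ']
            congr 1
            omega
          omega
      cases dir
      · -- dir = false
        have hIv := hIF rfl
        rcases lt_trichotomy (i0 - 2^k) istar with hlt | heq | hgt
        · have hnext := hstep_right n _ hsn (by simpa [stepIdx] using hlt)
          obtain ⟨n', hn', hS⟩ := hBIN (k-1) (i0 - 2^k) (i0 - 2^k/2) (n+1) hnext hlt
            (by omega) (by omega) (by omega)
          exact ⟨n', by omega, hS⟩
        · exact ⟨n, by omega, hFound n (by rw [hsn]; simpa [stepIdx] using heq)⟩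
        · have hnext := hstep_left n _ hsn (by simpa [stepIdx] using hgt)
            (by simp only [stepIdx]; omega)
          obtain ⟨n', hn', hS⟩ := ih (k+1) false (n+1) hnext
            (fun hc => by cases hc)
            (fun _ => by omega)
            (by rw [← hkr]; exact hbound)
          exact ⟨n', by omega, hS⟩
      · -- dir = true
        have hIv := hIT rfl
        rcases lt_trichotomy (min (i0 + 2^k) p.length) istar with hlt | heq | hgt
        · have hnext := hstep_right n _ hsn (by simpa [stepIdx] using hlt)
          obtain ⟨n', hn', hS⟩ := ih (k+1) true (n+1) hnext
            (fun _ => by omega)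
            (fun hc => by cases hc)
            (by rw [← hkr]; exact hbound)
          exact ⟨n', by omega, hS⟩
        · exact ⟨n, by omega, hFound n (by rw [hsn]; simpa [stepIdx] using heq)⟩
        · have hnext := hstep_left n _ hsn (by simpa [stepIdx] using hgt)
            (by simp only [stepIdx]; omega)
          obtain ⟨n', hn', hS⟩ := hBIN (k-1) (i0 + 2^k/2) (min (i0 + 2^k) p.length) (n+1)
            hnext hIv hgt (by omega) (by omega)
          exact ⟨n', by omega, hS⟩
  -- distance bound : (max i0 istar - min i0 istar) ≤ T.dist s t
  obtain ⟨is2, his2L, Phis⟩ := spine_formula hT p hp s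
  have hcl := hclose (p.getVert is2) (getVert_mem_support' p is2)
  rw [← hfi0] at hcl
  have h1s := Phis i0 hi0L
  have his2 : is2 = i0 := by omega
  rw [his2] at Phis
  have hT1 : T.dist (p.getVert i0) t ≤ T.dist (p.getVert i0) s + T.dist s t :=
    hconn.dist_triangle
  have hT2 : T.dist (p.getVert istar) s ≤ T.dist (p.getVert istar) t + T.dist t s :=
    hconn.dist_triangle
  have hcomm : T.dist t s = T.dist s t := SimpleGraph.dist_comm
  have hPt0 := Phi i0 hi0L
  have hPsStar := Phis istar histL
  have hdbound : max i0 istar - min i0 istar ≤ T.dist s t := by omega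
  -- log bound
  have hlog1 : 1 ≤ Nat.log 2 (T.dist s t + 2) := by
    have h21 : (2:ℕ)^1 ≤ T.dist s t + 2 := by
      simpa using Nat.le_add_left 2 (T.dist s t)
    exact (Nat.le_log_iff_pow_le (by norm_num) (by omega)).mpr h21
  refine ⟨by rw [hqn 0, hst0]; exact hfi0, fun n => by rw [hqn n]; exact getVert_mem_support' p _, ?_⟩
  by_cases h0 : istar = i0
  · refine ⟨0, by omega, ?_⟩
    have := hFound 0 (by rw [hst0]; simpa [stepIdx] using h0.symm)
    rwa [hSuccdef] at this
  · -- set up the doubling bound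
    set d := max i0 istar - min i0 istar with hddef
    set r := Nat.log 2 (2*d+2) + 1 with hrdef
    have hrb : 2*d + 2 ≤ 2^(0+r) := by
      have := Nat.lt_pow_succ_log_self (by norm_num : 1 < 2) (2*d+2)
      rw [hrdef]
      simpa using this.le
    have hlogd : Nat.log 2 (2*d+2) ≤ 2 * Nat.log 2 (T.dist s t + 2) + 1 := by
      have hle : 2*d+2 ≤ (T.dist s t + 2)^2 := by nlinarith [hdbound]
      have h1 : Nat.log 2 (2*d+2) ≤ Nat.log 2 ((T.dist s t + 2)^2) :=
        Nat.log_mono_right hle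
      have h2 : (T.dist s t + 2)^2 < 2^(2 * Nat.log 2 (T.dist s t + 2) + 2) := by
        have hx := Nat.lt_pow_succ_log_self (by norm_num : 1 < 2) (T.dist s t + 2)
        calc (T.dist s t + 2)^2 < (2^(Nat.log 2 (T.dist s t + 2) + 1))^2 := by
              exact Nat.pow_lt_pow_left hx (by norm_num)
          _ = 2^(2 * Nat.log 2 (T.dist s t + 2) + 2) := by
              rw [← pow_mul]; congr 1; ring
      have h3 : Nat.log 2 ((T.dist s t + 2)^2) < 2 * Nat.log 2 (T.dist s t + 2) + 2 :=
        Nat.log_lt_of_lt_pow (by positivity) h2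
      omega
    rcases Nat.lt_or_ge i0 istar with hlt | hge
    · have hnext := hstep_right 0 ExpState.start hst0 (by simpa [stepIdx] using hlt)
      obtain ⟨n', hn', hS⟩ := hDBL r 0 true 1 hnext
        (fun _ => by simpa using hlt) (fun hc => by cases hc) hrb
      refine ⟨n', by omega, ?_⟩
      rwa [hSuccdef] at hS
    · have hgt : istar < i0 := by omega
      have hnext := hstep_left 0 ExpState.start hst0 (by simpa [stepIdx] using hgt)
        (by simpa [stepIdx] using hi0L)
      obtain ⟨n', hn', hS⟩ := hDBL r 0 false 1 hnext
        (fun hc => by cases hc) (fun _ => by simpa using hgt) hrb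
      refine ⟨n', by omega, ?_⟩
      rwa [hSuccdef] at hS
end

section
/- For every constant c > 0 there exist a finite tree T and a prediction vertex s ∈ V(T) such that for every deterministic search strategy on T that is correct on V(T) (and likewise for every zero-error randomized strategy, measuring expected query cost over its internal randomness), there exists a target t ∈ V(T) whose query cost exceeds c · log₂(dist_T(s,t) + 2). In other words, no algorithm for Search on Trees achieves query complexity O(log dist_T(s,t)) on every tree, prediction, and target. -/
open SimpleGraph

/-- parent function on heap indices -/
def pa (n : ℕ) : ℕ := (n - 1) / 2

lemma pa_lt {n : ℕ} (h : n ≠ 0) : pa n < n :=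
  lt_of_le_of_lt (Nat.div_le_self _ _) (Nat.sub_lt (Nat.pos_of_ne_zero h) one_pos)

lemma pa_le (n : ℕ) : pa n ≤ n := le_trans (Nat.div_le_self _ _) (Nat.sub_le _ _)

/-- The complete binary tree on `Fin N` with heap indexing. -/
def bt (N : ℕ) : SimpleGraph (Fin N) where
  Adj a b := ((a : ℕ) = pa b ∧ (b : ℕ) ≠ 0) ∨ ((b : ℕ) = pa a ∧ (a : ℕ) ≠ 0)
  symm := by constructor; intro a b h; tauto
  loopless := by
    constructor
    intro a h
    rcases h with ⟨h1, h2⟩ | ⟨h1, h2⟩ <;> exact absurd h1.symm (Nat.ne_of_lt (pa_lt h2))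

lemma bt_adj_parent {N : ℕ} (v p : Fin N) (hv : (v:ℕ) ≠ 0) (hp : (p:ℕ) = pa v) :
    (bt N).Adj p v := Or.inl ⟨hp, hv⟩

lemma bt_reach {N : ℕ} (r : Fin N) (hr : (r:ℕ) = 0) (v : Fin N) : (bt N).Reachable v r := by
  obtain ⟨n, hn⟩ : ∃ n, (v:ℕ) = n := ⟨v, rfl⟩
  induction n using Nat.strong_induction_on generalizing v with
  | _ n ih =>
    by_cases h0 : (v:ℕ) = 0
    · have hvr : v = r := Fin.ext (by rw [h0, hr])
      rw [hvr]
    · have hlt : pa v < N := lt_of_le_of_lt (pa_le _) v.isLt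
      have hadj : (bt N).Adj (⟨pa v, hlt⟩ : Fin N) v := bt_adj_parent v _ h0 rfl
      have := ih (pa v) (hn ▸ pa_lt h0) ⟨pa v, hlt⟩ rfl
      exact (hadj.symm.reachable).trans this

lemma bt_connected {N : ℕ} (hN : 0 < N) : (bt N).Connected := by
  rw [connected_iff]
  refine ⟨fun u v => ?_, ⟨⟨0, hN⟩⟩⟩
  exact (bt_reach ⟨0, hN⟩ rfl u).trans (bt_reach ⟨0, hN⟩ rfl v).symm

lemma pa_iter_le (k n : ℕ) : pa^[k] n ≤ n := by
  induction k generalizing n with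
  | zero => simp
  | succ k ih => rw [Function.iterate_succ_apply]; exact le_trans (ih _) (pa_le n)

/-- the invariant set: descendants of x -/
lemma bt_isBridge {N : ℕ} (x p : Fin N) (hx : (x:ℕ) ≠ 0) (hp : (p:ℕ) = pa x) :
    (bt N).IsBridge s(p, x) := by
  rw [isBridge_iff]
  show ¬ _
  intro hreach
  set S : Set (Fin N) := {u | ∃ k, pa^[k] (u:ℕ) = (x:ℕ)} with hS
  -- edges of the pruned graph preserve S
  have key : ∀ a b : Fin N, ((bt N) \ fromEdgeSet {s(p, x)}).Adj a b → a ∈ S → b ∈ S := by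
    intro a b hab haS
    rw [sdiff_adj, fromEdgeSet_adj] at hab
    obtain ⟨hadj, hne⟩ := hab
    have hne' : s(a, b) ≠ s(p, x) := by
      intro h; exact hne ⟨Set.mem_singleton_iff.mpr h, hadj.ne⟩
    obtain ⟨k, hk⟩ := haS
    rcases hadj with ⟨h1, h2⟩ | ⟨h1, h2⟩
    · -- a = pa b : b is child of a; pa^[k+1] b = pa^[k] a = x
      exact ⟨k + 1, by rw [Function.iterate_succ_apply, ← h1, hk]⟩
    · -- b = pa a, a ≠ 0 : b is parent of a
      cases k with
      | zero =>
        simp only [Function.iterate_zero, id] at hk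
        exfalso
        apply hne'
        have hax : a = x := Fin.ext hk
        have hbp : b = p := Fin.ext (by rw [h1, hp, hax])
        rw [hax, hbp, Sym2.eq_swap]
      | succ k =>
        exact ⟨k, by rw [← hk, Function.iterate_succ_apply, ← h1]⟩
  have hwalk : ∀ (a b : Fin N) (w : ((bt N) \ fromEdgeSet {s(p, x)}).Walk a b), a ∈ S → b ∈ S := by
    intro a b w
    induction w with
    | nil => exact id
    | cons h _ ih => intro ha; exact ih (key _ _ h ha)
  have hxS : x ∈ S := ⟨0, rfl⟩
  obtain ⟨w⟩ := hreach.symm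
  obtain ⟨k, hk⟩ := hwalk _ _ w hxS
  have : pa^[k+1] (x:ℕ) = (x:ℕ) := by rw [Function.iterate_succ_apply, ← hp, hk]
  have hlt : pa^[k+1] (x:ℕ) < (x:ℕ) := by
    calc pa^[k+1] (x:ℕ) = pa^[k] (pa (x:ℕ)) := Function.iterate_succ_apply _ _ _
    _ ≤ pa (x:ℕ) := pa_iter_le _ _
    _ < (x:ℕ) := pa_lt hx
  omega

lemma bt_isTree {N : ℕ} (hN : 0 < N) : (bt N).IsTree := by
  refine ⟨bt_connected hN, ?_⟩
  rw [isAcyclic_iff_forall_adj_isBridge]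
  intro v w hadj
  rcases hadj with ⟨h1, h2⟩ | ⟨h1, h2⟩
  · exact bt_isBridge w v h2 h1
  · rw [Sym2.eq_swap]; exact bt_isBridge v w h2 h1

lemma bt_deg {N : ℕ} (v : Fin N) :
    ∃ s : Finset (Fin N), s.card ≤ 3 ∧ ∀ u, (bt N).Adj v u → u ∈ s := by
  have hN : 0 < N := lt_of_le_of_lt (Nat.zero_le _) v.isLt
  let f : ℕ → Fin N := fun m => if h : m < N then ⟨m, h⟩ else v
  refine ⟨{f (pa v), f (2 * v + 1), f (2 * v + 2)}, ?_, ?_⟩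
  · refine le_trans (Finset.card_insert_le _ _) ?_
    have := Finset.card_insert_le (f (2 * v + 1)) {f (2 * ↑v + 2)}
    have h1 : ({f (2 * ↑v + 2)} : Finset (Fin N)).card = 1 := Finset.card_singleton _
    omega
  · intro u hadj
    have hfu : f (u : ℕ) = u := by simp [f, u.isLt]
    rcases hadj with ⟨h1, h2⟩ | ⟨h1, h2⟩
    · -- v = pa u, u ≠ 0 : u is a child of v
      have : (u : ℕ) = 2 * v + 1 ∨ (u : ℕ) = 2 * v + 2 := by
        unfold pa at h1; omega
      rcases this with h | h <;> rw [← hfu, h] <;> simp [Finset.mem_insert]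
    · -- u = pa v
      rw [← hfu, h1]; simp [Finset.mem_insert]

lemma bt_dist_le {N : ℕ} (r v : Fin N) (hr : (r : ℕ) = 0) (k : ℕ)
    (h : (v : ℕ) + 1 < 2 ^ (k + 1)) : (bt N).dist r v ≤ k := by
  have hN : 0 < N := lt_of_le_of_lt (Nat.zero_le _) v.isLt
  induction k generalizing v with
  | zero =>
    have hv0 : (v : ℕ) = 0 := by omega
    have hvr : v = r := Fin.ext (by rw [hv0, hr])
    rw [hvr, SimpleGraph.dist_self]
  | succ k ih =>
    by_cases h0 : (v : ℕ) = 0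
    · have hvr : v = r := Fin.ext (by rw [h0, hr])
      rw [hvr, SimpleGraph.dist_self]; exact Nat.zero_le _
    · have hlt : pa v < N := lt_of_le_of_lt (pa_le _) v.isLt
      set p : Fin N := ⟨pa v, hlt⟩ with hpdef
      have hadj : (bt N).Adj p v := bt_adj_parent v p h0 rfl
      have hp1 : (p : ℕ) + 1 < 2 ^ (k + 1) := by
        have h2 : (2:ℕ) ^ (k + 1 + 1) = 2 * 2 ^ (k + 1) := by ring
        simp only [hpdef]
        unfold pa; omega
      calc (bt N).dist r v ≤ (bt N).dist r p + (bt N).dist p v :=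
            (bt_connected hN).dist_triangle
        _ ≤ k + (bt N).dist p v := by
            exact Nat.add_le_add_right (ih p hp1) _
        _ ≤ k + 1 := by
            refine Nat.add_le_add_left ?_ _
            exact le_trans (dist_le (Walk.cons hadj Walk.nil)) (by simp)

section Count

variable {V : Type} [Fintype V] [DecidableEq V] (T : SimpleGraph V)

def shiftS {V : Type} (σ : Strategy V) (a : Option V) : Strategy V :=
  fun h => σ ((σ [], a) :: h)

omit [Fintype V] [DecidableEq V] in
lemma dirO_adj {t v u : V} (h : dirO T t v = some u) : T.Adj v u := by
  unfold dirO at h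
  split at h
  · rename_i hex
    injection h with h'
    rw [← h']
    exact hex.choose_spec.1
  · exact absurd h (by simp)

omit [Fintype V] [DecidableEq V] in
lemma histRun_shift (σ : Strategy V) (t : V) (n : ℕ) :
    histRun T σ t (n + 1) =
      (σ [], dirO T t (σ [])) :: histRun T (shiftS σ (dirO T t (σ []))) t n := by
  induction n with
  | zero => simp [histRun, shiftS]
  | succ n ih =>
    rw [show histRun T σ t (n + 1 + 1) =
      histRun T σ t (n+1) ++ [(σ (histRun T σ t (n+1)), dirO T t (σ (histRun T σ t (n+1))))]
      from rfl, ih]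
    rfl

omit [Fintype V] [DecidableEq V] in
lemma queryAt_shift (σ : Strategy V) (t : V) (n : ℕ) :
    queryAt T σ t (n + 1) = queryAt T (shiftS σ (dirO T t (σ []))) t n := by
  unfold queryAt
  rw [histRun_shift]
  rfl

lemma count_lemma (hdeg : ∀ v, ∃ s : Finset V, s.card ≤ 3 ∧ ∀ u, T.Adj v u → u ∈ s) :
    ∀ (K : ℕ) (σ : Strategy V),
      ({t | ∃ n < K, queryAt T σ t n = t}.toFinite.toFinset).card ≤ 5 ^ K := by
  intro K
  induction K with
  | zero =>
    intro σ
    convert Nat.zero_le _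
    rw [Finset.card_eq_zero, ← Finset.not_nonempty_iff_eq_empty]
    rintro ⟨t, ht⟩
    rw [Set.Finite.mem_toFinset] at ht
    obtain ⟨n, hn, -⟩ := ht
    omega
  | succ K ih =>
    intro σ
    set q0 := σ [] with hq0
    obtain ⟨s, hs3, hsmem⟩ := hdeg q0
    set A : Finset (Option V) := insert none (s.image some) with hA
    have hsub : ({t | ∃ n < K + 1, queryAt T σ t n = t}.toFinite.toFinset) ⊆
        insert q0 (A.biUnion fun a =>
          ({t | ∃ n < K, queryAt T (shiftS σ a) t n = t}.toFinite.toFinset)) := by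
      intro t ht
      rw [Set.Finite.mem_toFinset] at ht
      obtain ⟨n, hn, hq⟩ := ht
      rcases n with _ | m
      · have : queryAt T σ t 0 = q0 := by unfold queryAt; rw [show histRun T σ t 0 = [] from rfl]
        rw [this] at hq
        rw [← hq]
        exact Finset.mem_insert_self _ _
      · refine Finset.mem_insert_of_mem ?_
        rw [Finset.mem_biUnion]
        refine ⟨dirO T t q0, ?_, ?_⟩
        · rcases h : dirO T t q0 with _ | u
          · exact Finset.mem_insert_self _ _
          · exact Finset.mem_insert_of_mem
              (Finset.mem_image_of_mem some (hsmem u (dirO_adj T h)))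
        · rw [Set.Finite.mem_toFinset]
          refine ⟨m, by omega, ?_⟩
          rw [← queryAt_shift]
          exact hq
    calc ({t | ∃ n < K + 1, queryAt T σ t n = t}.toFinite.toFinset).card
        ≤ _ := Finset.card_le_card hsub
      _ ≤ (A.biUnion fun a =>
          ({t | ∃ n < K, queryAt T (shiftS σ a) t n = t}.toFinite.toFinset)).card + 1 :=
          Finset.card_insert_le _ _
      _ ≤ (∑ a ∈ A, ({t | ∃ n < K, queryAt T (shiftS σ a) t n = t}.toFinite.toFinset).card) + 1 :=
          Nat.add_le_add_right (Finset.card_biUnion_le) _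
      _ ≤ (∑ _a ∈ A, 5 ^ K) + 1 := by
          refine Nat.add_le_add_right (Finset.sum_le_sum fun a _ => ih _) _
      _ = A.card * 5 ^ K + 1 := by rw [Finset.sum_const, smul_eq_mul]
      _ ≤ 4 * 5 ^ K + 1 := by
          have hAcard : A.card ≤ 4 := by
            refine le_trans (Finset.card_insert_le _ _) ?_
            have := Finset.card_image_le (f := some) (s := s)
            omega
          exact Nat.add_le_add_right (Nat.mul_le_mul_right _ hAcard) _
      _ ≤ 5 ^ (K + 1) := by
          have : 1 ≤ 5 ^ K := Nat.one_le_pow _ _ (by norm_num)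
          rw [pow_succ]
          omega

lemma det_card_le (hdeg : ∀ v, ∃ s : Finset V, s.card ≤ 3 ∧ ∀ u, T.Adj v u → u ∈ s)
    (σ : Strategy V) (hcor : CorrectOn T σ Set.univ) (K : ℕ)
    (hall : ∀ t, costOf T σ t ≤ K) : Fintype.card V ≤ 5 ^ K := by
  have hmem : ∀ t : V, t ∈ ({t | ∃ n < K, queryAt T σ t n = t}.toFinite.toFinset) := by
    intro t
    rw [Set.Finite.mem_toFinset]
    have hne : {n | queryAt T σ t n = t}.Nonempty := hcor t (Set.mem_univ t)
    have hmem := Nat.sInf_mem hne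
    have := hall t
    unfold costOf at this
    exact ⟨sInf {n | queryAt T σ t n = t}, by omega, hmem⟩
  calc Fintype.card V = Finset.univ.card := (Finset.card_univ).symm
    _ ≤ ({t | ∃ n < K, queryAt T σ t n = t}.toFinite.toFinset).card :=
        Finset.card_le_card (fun t _ => hmem t)
    _ ≤ 5 ^ K := count_lemma T hdeg K σ

lemma sum_cost_lower (hdeg : ∀ v, ∃ s : Finset V, s.card ≤ 3 ∧ ∀ u, T.Adj v u → u ∈ s)
    (σ : Strategy V) (hcor : CorrectOn T σ Set.univ) (K : ℕ) :
    (K + 1) * (Fintype.card V - 5 ^ K) ≤ ∑ t : V, costOf T σ t := by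
  set F := ({t | ∃ n < K, queryAt T σ t n = t}.toFinite.toFinset) with hF
  have hFcard : F.card ≤ 5 ^ K := count_lemma T hdeg K σ
  have hcost : ∀ t ∈ Finset.univ \ F, K + 1 ≤ costOf T σ t := by
    intro t ht
    rw [Finset.mem_sdiff] at ht
    have hne : {n | queryAt T σ t n = t}.Nonempty := hcor t (Set.mem_univ t)
    have hsmem := Nat.sInf_mem hne
    have hKle : K ≤ sInf {n | queryAt T σ t n = t} := by
      by_contra hlt
      push_neg at hlt
      exact ht.2 (by rw [hF, Set.Finite.mem_toFinset]; exact ⟨_, hlt, hsmem⟩)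
    unfold costOf
    omega
  calc (K + 1) * (Fintype.card V - 5 ^ K)
      ≤ (K + 1) * (Finset.univ \ F).card := by
        refine Nat.mul_le_mul_left _ ?_
        rw [Finset.card_sdiff_of_subset (Finset.subset_univ F), Finset.card_univ]
        omega
    _ = (Finset.univ \ F).card * (K + 1) := Nat.mul_comm _ _
    _ ≤ ∑ t ∈ Finset.univ \ F, costOf T σ t := by
        have := Finset.card_nsmul_le_sum (Finset.univ \ F) (costOf T σ) (K + 1) hcost
        simpa [smul_eq_mul] using this
    _ ≤ ∑ t : V, costOf T σ t := Finset.sum_le_sum_of_subset (Finset.sdiff_subset)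

end Count

lemma exists_good_D (c : ℝ) (hc : 0 < c) :
    ∃ D : ℕ, 3 ≤ D ∧ c * Real.logb 2 ((D : ℝ) + 2) < (((D - 1) / 3 + 1 : ℕ) : ℝ) / 2 := by
  have hlog2 : (0 : ℝ) < Real.log 2 := Real.log_pos one_lt_two
  set ε : ℝ := Real.log 2 / (12 * (c + 1)) with hεdef
  have hε : 0 < ε := div_pos hlog2 (by positivity)
  have h := Real.isLittleO_log_id_atTop.def hε
  rw [Filter.eventually_atTop] at h
  obtain ⟨a, ha⟩ := h
  refine ⟨max 3 ⌈a⌉₊, le_max_left _ _, ?_⟩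
  set D : ℕ := max 3 ⌈a⌉₊ with hDdef
  have hD3 : (3 : ℕ) ≤ D := le_max_left _ _
  have hD3R : (3 : ℝ) ≤ (D : ℝ) := by exact_mod_cast hD3
  have hxa : a ≤ (D : ℝ) + 2 := by
    have h1 : a ≤ (⌈a⌉₊ : ℝ) := Nat.le_ceil a
    have h2 : ((⌈a⌉₊ : ℕ) : ℝ) ≤ (D : ℝ) := Nat.cast_le.mpr (le_max_right _ _)
    linarith
  have hx1 : (1 : ℝ) ≤ (D : ℝ) + 2 := by linarith
  have hlog := ha _ hxa
  simp only [Real.norm_eq_abs, id] at hlog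
  rw [abs_of_nonneg (Real.log_nonneg hx1), abs_of_nonneg (by linarith : (0:ℝ) ≤ (D:ℝ) + 2)]
    at hlog
  -- hlog : Real.log ((D:ℝ)+2) ≤ ε * ((D:ℝ)+2)
  have h1 : c * Real.logb 2 ((D : ℝ) + 2) < ((D : ℝ) + 2) / 12 := by
    have hlogb : Real.logb 2 ((D : ℝ) + 2) ≤ ((D : ℝ) + 2) / (12 * (c + 1)) := by
      rw [Real.logb]
      rw [div_le_iff₀ hlog2]
      calc Real.log ((D:ℝ) + 2) ≤ ε * ((D:ℝ) + 2) := hlog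
        _ = ((D:ℝ) + 2) / (12 * (c + 1)) * Real.log 2 := by
            rw [hεdef]; field_simp
    calc c * Real.logb 2 ((D : ℝ) + 2) ≤ c * (((D : ℝ) + 2) / (12 * (c + 1))) :=
          mul_le_mul_of_nonneg_left hlogb hc.le
      _ < ((D : ℝ) + 2) / 12 := by
          rw [mul_div_assoc', div_lt_div_iff₀ (by positivity) (by norm_num)]
          nlinarith
  have hK : (D : ℝ) / 3 ≤ (((D - 1) / 3 + 1 : ℕ) : ℝ) := by
    have h3 : D ≤ 3 * ((D - 1) / 3 + 1) := by omega
    have h3R : (D : ℝ) ≤ 3 * (((D - 1) / 3 + 1 : ℕ) : ℝ) := by exact_mod_cast h3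
    linarith
  have h2 : ((D : ℝ) + 2) / 12 ≤ (D : ℝ) / 6 := by linarith
  have h3 : (D : ℝ) / 6 ≤ (((D - 1) / 3 + 1 : ℕ) : ℝ) / 2 := by linarith
  linarith

lemma pow_ineq (D : ℕ) (hD : 3 ≤ D) : 2 * 5 ^ ((D - 1) / 3) ≤ 2 ^ D := by
  set K := (D - 1) / 3 with hK
  have h1 : 3 * K + 1 ≤ D := by omega
  have h2 : (5 : ℕ) ^ K ≤ 8 ^ K := Nat.pow_le_pow_left (by norm_num) _
  have h3 : (8 : ℕ) ^ K = 2 ^ (3 * K) := by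
    rw [pow_mul]; norm_num
  calc 2 * 5 ^ K ≤ 2 * 2 ^ (3 * K) := by omega
    _ = 2 ^ (3 * K + 1) := by ring
    _ ≤ 2 ^ D := Nat.pow_le_pow_right (by norm_num) h1

/-- For every constant `c > 0` there is a finite tree `T` and a
prediction `s` such that every deterministic search strategy correct on `V(T)` has some
target `t` whose query cost exceeds `c * log₂(dist_T(s,t) + 2)`, and likewise every
zero-error randomized strategy (a distribution over deterministic correct strategies)
has some target whose expected query cost exceeds `c * log₂(dist_T(s,t) + 2)`. -/
theorem no_log_dist_algorithm_on_trees :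
    ∀ c : ℝ, 0 < c →
      ∃ (V : Type) (_ : Fintype V) (T : SimpleGraph V) (_ : T.IsTree) (s : V),
        (∀ σ : Strategy V, CorrectOn T σ Set.univ →
          ∃ t : V, c * Real.logb 2 ((T.dist s t : ℝ) + 2) < (costOf T σ t : ℝ)) ∧
        (∀ D : PMF (Strategy V), (∀ σ ∈ D.support, CorrectOn T σ Set.univ) →
          ∃ t : V, ENNReal.ofReal (c * Real.logb 2 ((T.dist s t : ℝ) + 2)) <
            ∑' σ : Strategy V, D σ * (costOf T σ t : ENNReal)) := by
  intro c hc
  obtain ⟨D, hD3, hmain⟩ := exists_good_D c hc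
  set K : ℕ := (D - 1) / 3 with hKdef
  have hpow : 2 * 5 ^ K ≤ 2 ^ D := pow_ineq D hD3
  set N : ℕ := 2 ^ (D + 1) - 1 with hNdef
  have h2D1 : 2 ^ (D + 1) = 2 * 2 ^ D := by ring
  have h2Dpos : 0 < 2 ^ D := Nat.pow_pos (by norm_num)
  have h2D : 2 ^ D ≤ N := by omega
  have hN0 : 0 < N := lt_of_lt_of_le h2Dpos h2D
  have hcard : Fintype.card (Fin N) = N := Fintype.card_fin N
  set root : Fin N := ⟨0, hN0⟩ with hroot
  have hdist : ∀ t : Fin N, (bt N).dist root t ≤ D := by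
    intro t
    refine bt_dist_le root t rfl D ?_
    have h1 := t.isLt
    have h2pos : 0 < 2 ^ (D + 1) := Nat.pow_pos (by norm_num)
    omega
  have hlogb : ∀ t : Fin N,
      c * Real.logb 2 (((bt N).dist root t : ℝ) + 2) ≤ c * Real.logb 2 ((D : ℝ) + 2) := by
    intro t
    refine mul_le_mul_of_nonneg_left ?_ hc.le
    refine Real.logb_le_logb_of_le one_lt_two (by positivity) ?_
    have : (((bt N).dist root t : ℕ) : ℝ) ≤ ((D : ℕ) : ℝ) := Nat.cast_le.mpr (hdist t)
    linarith
  have hK2 : c * Real.logb 2 ((D : ℝ) + 2) < (((K + 1 : ℕ)) : ℝ) / 2 := hmain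
  have hKhalf : (((K + 1 : ℕ)) : ℝ) / 2 ≤ (((K + 1 : ℕ)) : ℝ) :=
    half_le_self (Nat.cast_nonneg _)
  have hdeg : ∀ v : Fin N, ∃ s : Finset (Fin N), s.card ≤ 3 ∧
      ∀ u, (bt N).Adj v u → u ∈ s := fun v => bt_deg v
  refine ⟨Fin N, inferInstance, bt N, bt_isTree hN0, root, ?_, ?_⟩
  · -- deterministic case
    intro σ hcor
    by_contra hno
    push_neg at hno
    have hall : ∀ t, costOf (bt N) σ t ≤ K := by
      intro t
      have h1 : (costOf (bt N) σ t : ℝ) < (((K + 1 : ℕ)) : ℝ) :=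
        lt_of_le_of_lt (le_trans (hno t) (hlogb t)) (lt_of_lt_of_le hK2 hKhalf)
      have h2 : costOf (bt N) σ t < K + 1 := by exact_mod_cast h1
      omega
    have hle := det_card_le (bt N) hdeg σ hcor K hall
    rw [hcard] at hle
    omega
  · -- randomized case
    intro Dp hDp
    by_contra hno
    push_neg at hno
    set β : ℝ := c * Real.logb 2 ((D : ℝ) + 2) with hβdef
    have hβ0 : 0 ≤ β := by
      refine mul_nonneg hc.le (Real.logb_nonneg one_lt_two ?_)
      have : (0:ℝ) ≤ (D:ℝ) := Nat.cast_nonneg D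
      linarith
    set L : ℕ := (K + 1) * (N - 5 ^ K) with hLdef
    have h5N : 5 ^ K ≤ N := by omega
    have step1 : (L : ENNReal) ≤
        ∑' σ : Strategy (Fin N), Dp σ * ((∑ t : Fin N, costOf (bt N) σ t : ℕ) : ENNReal) := by
      calc (L : ENNReal) = ∑' σ : Strategy (Fin N), Dp σ * (L : ENNReal) := by
            rw [ENNReal.tsum_mul_right, Dp.tsum_coe, one_mul]
        _ ≤ _ := by
            refine ENNReal.tsum_le_tsum fun σ => ?_
            by_cases hσ : σ ∈ Dp.support
            · refine mul_le_mul_right ?_ _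
              have hnat : L ≤ ∑ t : Fin N, costOf (bt N) σ t := by
                have := sum_cost_lower (bt N) hdeg σ (hDp σ hσ) K
                rw [hcard] at this
                exact this
              exact_mod_cast hnat
            · have : Dp σ = 0 := by
                by_contra hne
                exact hσ ((Dp.mem_support_iff σ).mpr hne)
              simp [this]
    have step2 : ∑ t : Fin N, ∑' σ : Strategy (Fin N), Dp σ * (costOf (bt N) σ t : ENNReal)
        = ∑' σ : Strategy (Fin N),
            Dp σ * ((∑ t : Fin N, costOf (bt N) σ t : ℕ) : ENNReal) := by
      rw [← tsum_fintype (L := SummationFilter.unconditional _), ENNReal.tsum_comm]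
      refine tsum_congr fun σ => ?_
      rw [ENNReal.tsum_mul_left, tsum_fintype]
      congr 1
      rw [Nat.cast_sum]
    have step3 : ∑ t : Fin N, ∑' σ : Strategy (Fin N), Dp σ * (costOf (bt N) σ t : ENNReal)
        ≤ (N : ENNReal) * ENNReal.ofReal β := by
      calc ∑ t : Fin N, ∑' σ : Strategy (Fin N), Dp σ * (costOf (bt N) σ t : ENNReal)
          ≤ ∑ _t : Fin N, ENNReal.ofReal β :=
            Finset.sum_le_sum fun t _ =>
              le_trans (hno t) (ENNReal.ofReal_le_ofReal (hlogb t))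
        _ = (N : ENNReal) * ENNReal.ofReal β := by
            rw [Finset.sum_const, Finset.card_univ, hcard, nsmul_eq_mul]
    have hEN : (L : ENNReal) ≤ (N : ENNReal) * ENNReal.ofReal β :=
      le_trans (le_trans step1 (le_of_eq step2.symm)) step3
    have hreal : (L : ℝ) ≤ (N : ℝ) * β := by
      rw [← ENNReal.ofReal_natCast L, ← ENNReal.ofReal_natCast N,
        ← ENNReal.ofReal_mul (Nat.cast_nonneg N)] at hEN
      exact (ENNReal.ofReal_le_ofReal_iff (mul_nonneg (Nat.cast_nonneg N) hβ0)).mp hEN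
    have hLR : (L : ℝ) = ((K : ℝ) + 1) * ((N : ℝ) - (5 : ℝ) ^ K) := by
      rw [hLdef]
      push_cast [Nat.cast_sub h5N]
      ring
    have h5NR : 2 * (5 : ℝ) ^ K ≤ (N : ℝ) := by
      have hnat : 2 * 5 ^ K ≤ N := by omega
      exact_mod_cast hnat
    have hmain' : 2 * β < (K : ℝ) + 1 := by
      have := hK2
      push_cast at this
      linarith
    have h5pos : (0 : ℝ) < (5 : ℝ) ^ K := by positivity
    have hNpos : (0 : ℝ) < (N : ℝ) := by exact_mod_cast hN0
    have hK1 : (0 : ℝ) < (K : ℝ) + 1 := by positivity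
    have hprod1 : (N : ℝ) * (2 * β) < (N : ℝ) * ((K : ℝ) + 1) :=
      mul_lt_mul_of_pos_left hmain' hNpos
    have hprod2 : (0 : ℝ) ≤ ((K : ℝ) + 1) * ((N : ℝ) - 2 * (5 : ℝ) ^ K) :=
      mul_nonneg hK1.le (by linarith)
    nlinarith [hreal, hLR, hprod1, hprod2]
end

section
/- There is a universal constant c₀ > 0 such that for every integer k ≥ 1 there exist a finite tree T of pathwidth exactly k and a prediction vertex s ∈ V(T) with the following property: for every deterministic search strategy on T correct on V(T) (and likewise for every zero-error randomized strategy, measuring expected query cost over its internal randomness), there exists a target t ∈ V(T) whose query cost is at least c₀ · k · log₂(dist_T(s,t) + 2). Consequently no algorithm for Search on Trees achieves expected query complexity o(k · log dist_T(s,t)) on every tree of pathwidth k, prediction s, and target t. -/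
open SimpleGraph

namespace PWLB

def L (k : ℕ) : ℕ := 2 ^ (6 * k + 6)

lemma L64 (k : ℕ) : 64 ≤ L k := by
  have : (64:ℕ) = 2^6 := by norm_num
  rw [this, L]; exact Nat.pow_le_pow_right (by norm_num) (by omega)

lemma L_pos (k : ℕ) : 0 < L k := by have := L64 k; omega

abbrev F (k : ℕ) := Fin (L k)

def f0 (k : ℕ) : F k := ⟨0, L_pos k⟩
def f1 (k : ℕ) : F k := ⟨1, by have := L64 k; omega⟩
def f2 (k : ℕ) : F k := ⟨2, by have := L64 k; omega⟩

def rt (k : ℕ) : List (F k) := [f0 k]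

def par {k : ℕ} : List (F k) → List (F k)
  | [] => []
  | a :: x => if a.val = 0 then x else ⟨a.val - 1, by omega⟩ :: x

def rk {k : ℕ} (l : List (F k)) : ℕ := l.length + (l.map Fin.val).sum

lemma rk_par {k : ℕ} (l : List (F k)) (h : l ≠ []) : rk (par l) + 1 = rk l := by
  match l with
  | a :: x =>
    by_cases h0 : a.val = 0
    · simp [par, h0, rk]; omega
    · simp [par, h0, rk]; omega

lemma par_length {k : ℕ} (l : List (F k)) : (par l).length ≤ l.length := by
  match l with
  | [] => simp [par]
  | a :: x => by_cases h0 : a.val = 0 <;> simp [par, h0]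

abbrev Vt (k : ℕ) := {l : List (F k) // l ≠ [] ∧ l.length ≤ k}

noncomputable instance {k : ℕ} : Fintype (Vt k) := by
  have hf : Function.Injective (fun (w : Vt k) (i : Fin k) => (↑w : List (F k))[i.val]?) := by
    intro w w' h
    apply Subtype.ext
    apply List.ext_getElem?
    intro n
    by_cases hn : n < k
    · exact congrFun h ⟨n, hn⟩
    · rw [List.getElem?_eq_none (by omega : (↑w : List (F k)).length ≤ n),
          List.getElem?_eq_none (by omega : (↑w' : List (F k)).length ≤ n)]
  have : Finite (Vt k) := Finite.of_injective _ hf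
  exact Fintype.ofFinite _


def adjP {k : ℕ} (a b : List (F k)) : Prop :=
  (a ≠ rt k ∧ par a = b) ∨ (b ≠ rt k ∧ par b = a)

def Tk (k : ℕ) : SimpleGraph (Vt k) where
  Adj u v := adjP (↑u : List (F k)) ↑v
  symm := by constructor; intro u v h; unfold adjP at *; tauto
  loopless := by
    constructor; intro u h
    have hu : (↑u : List (F k)) ≠ [] := u.2.1
    have h2 := rk_par (↑u : List (F k)) hu
    rcases h with ⟨_, h1⟩ | ⟨_, h1⟩ <;> rw [h1] at h2 <;> omega

lemma Tk_adj {k : ℕ} {u v : Vt k} : (Tk k).Adj u v ↔ adjP (↑u : List (F k)) ↑v := Iff.rfl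

lemma par_mem {k : ℕ} (l : List (F k)) (h1 : l ≠ []) (h2 : l.length ≤ k) (h3 : l ≠ rt k) :
    par l ≠ [] ∧ (par l).length ≤ k := by
  match l with
  | a :: x =>
    by_cases h0 : a.val = 0
    · have hx : x ≠ [] := by
        intro hx; subst hx
        exact h3 (by simp only [rt]; congr 1; exact Fin.ext h0)
      simp only [par, h0, if_true, eq_self_iff_true, List.length_cons] at h2 ⊢
      refine ⟨hx, by omega⟩
    · simp only [par, h0, if_neg h0, List.length_cons] at h2 ⊢
      refine ⟨by simp, by simp; omega⟩

/-- parent as a vertex -/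
def parV {k : ℕ} (u : Vt k) (h : (↑u : List (F k)) ≠ rt k) : Vt k :=
  ⟨par ↑u, par_mem _ u.2.1 u.2.2 h⟩

lemma adj_parV {k : ℕ} (u : Vt k) (h : (↑u : List (F k)) ≠ rt k) : (Tk k).Adj u (parV u h) :=
  Or.inl ⟨h, rfl⟩

lemma rt_mem {k : ℕ} (hk : 1 ≤ k) : (rt k ≠ []) ∧ (rt k).length ≤ k := by
  constructor
  · simp [rt]
  · simp [rt]; omega

def rtV {k : ℕ} (hk : 1 ≤ k) : Vt k := ⟨rt k, rt_mem hk⟩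

lemma rk_pos {k : ℕ} (u : Vt k) : 1 ≤ rk (↑u : List (F k)) := by
  have := u.2.1
  match h : (↑u : List (F k)) with
  | a :: x => simp [rk]; omega
  | [] => exact absurd h this

lemma rk_rt {k : ℕ} : rk (rt k) = 1 := by simp [rk, rt, f0]

lemma walk_rt {k : ℕ} (hk : 1 ≤ k) (u : Vt k) :
    ∃ p : (Tk k).Walk u (rtV hk), p.length + 1 = rk (↑u : List (F k)) := by
  generalize hn : rk (↑u : List (F k)) = n
  induction n using Nat.strong_induction_on generalizing u with
  | _ n ih =>
    by_cases h : (↑u : List (F k)) = rt k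
    · have hu : u = rtV hk := Subtype.ext h
      subst hu
      refine ⟨Walk.nil, ?_⟩
      rw [← hn]
      show 0 + 1 = rk (rt k)
      rw [rk_rt]
    · have hrk := rk_par (↑u : List (F k)) u.2.1
      obtain ⟨p, hp⟩ := ih (rk ((parV u h : Vt k) : List (F k)))
        (by show rk (par (↑u : List (F k))) < n; omega) (parV u h) rfl
      refine ⟨Walk.cons (adj_parV u h) p, ?_⟩
      rw [Walk.length_cons]
      have : rk ((parV u h : Vt k) : List (F k)) = rk (par (↑u : List (F k))) := rfl
      omega

lemma Tk_preconnected {k : ℕ} (hk : 1 ≤ k) : (Tk k).Preconnected := by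
  intro u v
  obtain ⟨p, _⟩ := walk_rt hk u
  obtain ⟨q, _⟩ := walk_rt hk v
  exact (Walk.reachable p).trans (Walk.reachable q).symm

lemma Tk_connected {k : ℕ} (hk : 1 ≤ k) : (Tk k).Connected := by
  haveI : Nonempty (Vt k) := ⟨rtV hk⟩
  exact ⟨Tk_preconnected hk⟩

lemma rk_le {k : ℕ} (u : Vt k) : rk (↑u : List (F k)) ≤ k * L k := by
  have h2 := u.2.2
  have hsum : ((↑u : List (F k)).map Fin.val).sum ≤ (↑u : List (F k)).length * (L k - 1) := by
    calc ((↑u : List (F k)).map Fin.val).sum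
        ≤ ((↑u : List (F k)).map Fin.val).length * (L k - 1) := by
          apply List.sum_le_card_nsmul
          intro x hx
          simp only [List.mem_map] at hx
          obtain ⟨a, _, rfl⟩ := hx
          have := a.isLt; omega
      _ = (↑u : List (F k)).length * (L k - 1) := by rw [List.length_map]
  have hL := L_pos k
  have h3 : (↑u : List (F k)).length * (L k - 1) ≤ k * (L k - 1) := Nat.mul_le_mul_right _ h2
  unfold rk
  have h4 : k * (L k - 1) + k = k * L k := by
    have h5 : L k - 1 + 1 = L k := by omega
    calc k * (L k - 1) + k = k * (L k - 1 + 1) := by ring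
    _ = k * L k := by rw [h5]
  omega

lemma dist_le_rt {k : ℕ} (hk : 1 ≤ k) (u : Vt k) : (Tk k).dist (rtV hk) u ≤ k * L k := by
  obtain ⟨p, hp⟩ := walk_rt hk u
  have h1 := SimpleGraph.dist_le p.reverse
  rw [Walk.length_reverse] at h1
  have hle := rk_le u
  rw [SimpleGraph.dist_comm] at h1
  calc (Tk k).dist (rtV hk) u ≤ p.length := by rw [SimpleGraph.dist_comm]; exact SimpleGraph.dist_le p
    _ ≤ k * L k := by omega


lemma adj_to_par {k : ℕ} {u w : Vt k} (h : (Tk k).Adj u w)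
    (hrk : rk (↑w : List (F k)) ≤ rk (↑u : List (F k))) : (↑w : List (F k)) = par ↑u := by
  rcases h with ⟨_, h1⟩ | ⟨_, h1⟩
  · exact h1.symm
  · exfalso
    have := rk_par (↑w : List (F k)) w.2.1
    rw [h1] at this
    omega

lemma list_head_ne_getLast {α : Type*} (l : List α) (hn : l.Nodup) (hl : 2 ≤ l.length) :
    l.head? ≠ l.getLast? := by
  match l with
  | a :: t =>
    have ht : t ≠ [] := by
      intro h; subst h; simp at hl
    intro h
    rw [List.head?_cons, List.getLast?_eq_getLast (by simp), List.getLast_cons ht] at h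
    have : a ∈ t := by
      have := List.getLast_mem ht
      rw [← Option.some_inj.mp h] at this
      exact this
    rw [List.nodup_cons] at hn
    exact hn.1 this

lemma edges_head {V : Type*} {G : SimpleGraph V} {u v : V} (p : G.Walk u v) (hp : ¬p.Nil) :
    p.edges.head? = some s(u, p.getVert 1) := by
  match p with
  | Walk.nil => simp at hp
  | Walk.cons h q =>
    rw [Walk.edges_cons, List.head?_cons]
    have h1 : (Walk.cons h q).getVert 1 = q.getVert 0 := rfl
    rw [h1, Walk.getVert_zero]

lemma Tk_acyclic {k : ℕ} : (Tk k).IsAcyclic := by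
  intro v c hc
  have hsupne : c.support.toFinset.Nonempty :=
    ⟨v, List.mem_toFinset.mpr c.start_mem_support⟩
  obtain ⟨u, hu, hmax⟩ := Finset.exists_max_image c.support.toFinset (fun w => rk (↑w : List (F k))) hsupne
  rw [List.mem_toFinset] at hu
  set c' := c.rotate u hu with hc'def
  have hc' : c'.IsCycle := hc.rotate hu
  have hlen : 3 ≤ c'.length := hc'.three_le_length
  have hnil : ¬c'.Nil := by rw [Walk.not_nil_iff_lt_length]; omega
  have hsup : ∀ w ∈ c'.support, rk (↑w : List (F k)) ≤ rk (↑u : List (F k)) := by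
    intro w hw
    rw [Walk.support_eq_cons] at hw
    rcases List.mem_cons.mp hw with hw | hw
    · rw [hw]
    · have hperm := Walk.support_rotate c u hu
      have : w ∈ c.support.tail := (hperm.mem_iff).mp hw
      apply hmax
      rw [List.mem_toFinset, Walk.support_eq_cons]
      right; exact this
  -- second vertex of c'
  have hadj1 : (Tk k).Adj u (c'.getVert 1) := c'.adj_snd hnil
  have hmem1 : c'.getVert 1 ∈ c'.support := by
    rw [Walk.mem_support_iff_exists_getVert]
    exact ⟨1, rfl, by omega⟩
  have hpar1 : (↑(c'.getVert 1) : List (F k)) = par ↑u := adj_to_par hadj1 (hsup _ hmem1)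
  -- second vertex of reverse
  have hnil' : ¬c'.reverse.Nil := by rw [Walk.not_nil_iff_lt_length, Walk.length_reverse]; omega
  have hadj2 : (Tk k).Adj u (c'.reverse.getVert 1) := c'.reverse.adj_snd hnil'
  have hmem2 : c'.reverse.getVert 1 ∈ c'.support := by
    have : c'.reverse.getVert 1 ∈ c'.reverse.support := by
      rw [Walk.mem_support_iff_exists_getVert]
      exact ⟨1, rfl, by rw [Walk.length_reverse]; omega⟩
    rwa [Walk.support_reverse, List.mem_reverse] at this
  have hpar2 : (↑(c'.reverse.getVert 1) : List (F k)) = par ↑u := adj_to_par hadj2 (hsup _ hmem2)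
  have hsnd : c'.getVert 1 = c'.reverse.getVert 1 := Subtype.ext (hpar1.trans hpar2.symm)
  -- first edge equals last edge
  have he1 : c'.edges.head? = some s(u, c'.getVert 1) := edges_head c' hnil
  have he2 : c'.reverse.edges.head? = some s(u, c'.reverse.getVert 1) := edges_head c'.reverse hnil'
  rw [Walk.edges_reverse, ← List.getLast?_eq_head?_reverse, ← hsnd] at he2
  have hnodup : c'.edges.Nodup := hc'.edges_nodup
  have hlen2 : 2 ≤ c'.edges.length := by rw [Walk.length_edges]; omega
  exact list_head_ne_getLast c'.edges hnodup hlen2 (he1.trans he2.symm)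

lemma Tk_isTree {k : ℕ} (hk : 1 ≤ k) : (Tk k).IsTree :=
  ⟨Tk_connected hk, Tk_acyclic⟩


/-! ### Pathwidth upper bound: an explicit path decomposition -/

def valf {k : ℕ} : List (F k) → ℕ
  | [] => 0
  | a :: x => valf x * (L k + 1) + a.val

def Bp (k j : ℕ) : ℕ := (L k + 1) ^ (k - j)

lemma Bp_pos (k j : ℕ) : 0 < Bp k j := Nat.pow_pos (by omega)

def hib {k : ℕ} (l : List (F k)) : ℕ := valf l * Bp k l.length + (Bp k l.length - 1)

def lob {k : ℕ} : List (F k) → ℕ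
  | [] => 0
  | a :: x => valf (a :: x) * Bp k (a :: x).length - (if a.val = 0 then 0 else 1)

lemma lob_le {k : ℕ} (l : List (F k)) : lob l ≤ valf l * Bp k l.length := by
  match l with
  | [] => simp [lob]
  | a :: x => exact Nat.sub_le _ _

lemma lob_le_hib {k : ℕ} (l : List (F k)) : lob l ≤ hib l :=
  le_trans (lob_le l) (Nat.le_add_right _ _)

lemma lob_eq_of_head_zero {k : ℕ} (a : F k) (x : List (F k)) (h : a.val = 0) :
    lob (a :: x) = valf (a :: x) * Bp k (a :: x).length := by
  simp [lob, h]

lemma lob_eq_of_head_ne {k : ℕ} (a : F k) (x : List (F k)) (h : a.val ≠ 0) :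
    lob (a :: x) = valf (a :: x) * Bp k (a :: x).length - 1 := by
  simp [lob, h]

lemma valf_lt {k : ℕ} (l : List (F k)) : valf l < (L k + 1) ^ l.length := by
  induction l with
  | nil => simp [valf]
  | cons a x ih =>
    have ha := a.isLt
    show valf x * (L k + 1) + a.val < (L k + 1) ^ (x.length + 1)
    rw [pow_succ]
    have h1 : valf x * (L k + 1) ≤ ((L k + 1) ^ x.length - 1) * (L k + 1) :=
      Nat.mul_le_mul_right _ (by omega)
    have h2 : ((L k + 1) ^ x.length - 1) * (L k + 1) = (L k + 1) ^ x.length * (L k + 1) - (L k + 1) := by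
      rw [Nat.sub_mul, one_mul]
    have h3 : 1 ≤ (L k + 1) ^ x.length := Nat.one_le_pow _ _ (by omega)
    have h4 : (L k + 1) ≤ (L k + 1) ^ x.length * (L k + 1) := by
      calc (L k + 1) = 1 * (L k + 1) := (one_mul _).symm
      _ ≤ (L k + 1) ^ x.length * (L k + 1) := Nat.mul_le_mul_right _ h3
    omega

lemma valf_inj {k : ℕ} : ∀ (x y : List (F k)), x.length = y.length → valf x = valf y → x = y := by
  intro x
  induction x with
  | nil => intro y hl _; exact (List.length_eq_zero_iff.mp hl.symm).symm ▸ rfl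
  | cons a x ih =>
    intro y hl hv
    match y with
    | b :: z =>
      simp only [List.length_cons] at hl
      have hmod : valf (a :: x) % (L k + 1) = a.val := by
        show (valf x * (L k + 1) + a.val) % (L k + 1) = a.val
        rw [Nat.mul_comm (valf x) (L k + 1), Nat.mul_add_mod]
        exact Nat.mod_eq_of_lt (by have := a.isLt; omega)
      have hmod' : valf (b :: z) % (L k + 1) = b.val := by
        show (valf z * (L k + 1) + b.val) % (L k + 1) = b.val
        rw [Nat.mul_comm (valf z) (L k + 1), Nat.mul_add_mod]
        exact Nat.mod_eq_of_lt (by have := b.isLt; omega)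
      have hab : a.val = b.val := by rw [← hmod, ← hmod', hv]
      have hdiv : valf (a :: x) / (L k + 1) = valf x := by
        show (valf x * (L k + 1) + a.val) / (L k + 1) = valf x
        rw [Nat.mul_comm, Nat.mul_add_div (by omega)]
        rw [Nat.div_eq_of_lt (by have := a.isLt; omega)]
        omega
      have hdiv' : valf (b :: z) / (L k + 1) = valf z := by
        show (valf z * (L k + 1) + b.val) / (L k + 1) = valf z
        rw [Nat.mul_comm, Nat.mul_add_div (by omega)]
        rw [Nat.div_eq_of_lt (by have := b.isLt; omega)]
        omega
      have hxz : valf x = valf z := by rw [← hdiv, ← hdiv', hv]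
      have := ih z (by omega) hxz
      rw [this, Fin.ext hab]

lemma pow_split (k j : ℕ) (h : j ≤ k) : (L k + 1) ^ j * Bp k j = (L k + 1) ^ k := by
  rw [Bp, ← pow_add]
  congr 1
  omega

lemma hib_lt {k : ℕ} (v : Vt k) : hib (↑v : List (F k)) < (L k + 1) ^ k := by
  have h1 := valf_lt (↑v : List (F k))
  have h2 := Bp_pos k (↑v : List (F k)).length
  have h3 := pow_split k (↑v : List (F k)).length v.2.2
  unfold hib
  have h4 : (valf (↑v : List (F k)) + 1) * Bp k (↑v : List (F k)).length
      ≤ (L k + 1) ^ (↑v : List (F k)).length * Bp k (↑v : List (F k)).length :=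
    Nat.mul_le_mul_right _ (by omega)
  have h5 : (valf (↑v : List (F k)) + 1) * Bp k (↑v : List (F k)).length
      = valf (↑v : List (F k)) * Bp k (↑v : List (F k)).length + Bp k (↑v : List (F k)).length := by
    ring
  omega

noncomputable def bagF (k : ℕ) (i : ℕ) : Finset (Vt k) :=
  Finset.univ.filter (fun v => lob (↑v : List (F k)) ≤ i ∧ i ≤ hib (↑v : List (F k)))

lemma mem_bagF {k : ℕ} {i : ℕ} {v : Vt k} :
    v ∈ bagF k i ↔ lob (↑v : List (F k)) ≤ i ∧ i ≤ hib (↑v : List (F k)) := by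
  simp [bagF]


lemma edge_bag {k : ℕ} (u v : Vt k) (h1 : (↑u : List (F k)) ≠ rt k)
    (h2 : par (↑u : List (F k)) = ↑v) :
    ∃ i < (L k + 1) ^ k, u ∈ bagF k i ∧ v ∈ bagF k i := by
  obtain ⟨a, x, hu⟩ := List.exists_cons_of_ne_nil u.2.1
  have hjk : x.length + 1 ≤ k := by
    have := u.2.2; rw [hu] at this; simpa using this
  by_cases h0 : a.val = 0
  · -- pendant edge : v = x
    have hvx : (↑v : List (F k)) = x := by
      rw [← h2, hu]; simp [par, h0]
    set j := x.length with hj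
    set B := Bp k j with hB
    set B' := Bp k (j + 1) with hB'
    have hBB : B = B' * (L k + 1) := by
      rw [hB, hB', Bp, Bp, ← pow_succ]
      congr 1
      omega
    have hB'pos : 0 < B' := Bp_pos _ _
    have hvu : valf (↑u : List (F k)) = valf x * (L k + 1) := by
      rw [hu]; show valf x * (L k + 1) + a.val = _; omega
    have hlenu : (↑u : List (F k)).length = j + 1 := by rw [hu]; simp [hj]
    have hhibu : hib (↑u : List (F k)) = valf x * B + (B' - 1) := by
      unfold hib
      rw [hlenu, hvu, ← hB']
      have : valf x * (L k + 1) * B' = valf x * B := by rw [hBB]; ring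
      rw [this]
    have hlobu : lob (↑u : List (F k)) ≤ valf x * B := by
      have := lob_le (↑u : List (F k))
      rw [hlenu, hvu, ← hB'] at this
      have h3 : valf x * (L k + 1) * B' = valf x * B := by rw [hBB]; ring
      rwa [h3] at this
    have hhibv : hib (↑v : List (F k)) = valf x * B + (B - 1) := by
      unfold hib; rw [hvx, ← hj, ← hB]
    have hlobv : lob (↑v : List (F k)) ≤ valf x * B := by
      rw [hvx]
      simpa [hB, hj] using lob_le x
    have hB'B : B' ≤ B := by
      rw [hB, hB', Bp, Bp]
      exact Nat.pow_le_pow_right (by omega) (by omega)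
    refine ⟨hib (↑u : List (F k)), hib_lt u, ?_, ?_⟩
    · rw [mem_bagF]; omega
    · rw [mem_bagF]; omega
  · -- sibling edge : v = (a-1) :: x
    have hvx : (↑v : List (F k)) = (⟨a.val - 1, by omega⟩ : F k) :: x := by
      rw [← h2, hu]; simp [par, h0]
    set j := x.length with hj
    set B := Bp k (j + 1) with hB
    have hBpos : 0 < B := Bp_pos _ _
    have hlenu : (↑u : List (F k)).length = j + 1 := by rw [hu]; simp [hj]
    have hlenv : (↑v : List (F k)).length = j + 1 := by rw [hvx]; simp [hj]
    have hvu : valf (↑u : List (F k)) = valf x * (L k + 1) + a.val := by rw [hu]; rfl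
    have hvv : valf (↑v : List (F k)) = valf x * (L k + 1) + (a.val - 1) := by rw [hvx]; rfl
    have hsucc : valf (↑u : List (F k)) = valf (↑v : List (F k)) + 1 := by omega
    have hlobu : lob (↑u : List (F k)) = valf (↑u : List (F k)) * B - 1 := by
      rw [hu] at hsucc ⊢
      rw [lob_eq_of_head_ne a x h0]
      rw [List.length_cons, ← hj, ← hB]
    have hhibu : hib (↑u : List (F k)) = valf (↑u : List (F k)) * B + (B - 1) := by
      unfold hib; rw [hlenu, ← hB]
    have hhibv : hib (↑v : List (F k)) = valf (↑v : List (F k)) * B + (B - 1) := by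
      unfold hib; rw [hlenv, ← hB]
    have hlobv : lob (↑v : List (F k)) ≤ valf (↑v : List (F k)) * B := by
      have := lob_le (↑v : List (F k)); rwa [hlenv, ← hB] at this
    have hmul : valf (↑u : List (F k)) * B = valf (↑v : List (F k)) * B + B := by
      rw [hsucc]; ring
    refine ⟨hib (↑v : List (F k)), hib_lt v, ?_, ?_⟩
    · rw [mem_bagF]; omega
    · rw [mem_bagF]; omega

noncomputable def PD (k : ℕ) : PathDecomp (Tk k) where
  m := (L k + 1) ^ k
  bags i := bagF k i.val
  cover := by
    intro v
    refine ⟨⟨hib (↑v : List (F k)), hib_lt v⟩, ?_⟩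
    rw [mem_bagF]
    exact ⟨lob_le_hib _, le_refl _⟩
  edgeCover := by
    intro u v h
    rcases h with ⟨ha, hb⟩ | ⟨ha, hb⟩
    · obtain ⟨i, hi, h1, h2⟩ := edge_bag u v ha hb
      exact ⟨⟨i, hi⟩, h1, h2⟩
    · obtain ⟨i, hi, h1, h2⟩ := edge_bag v u ha hb
      exact ⟨⟨i, hi⟩, h2, h1⟩
  interval := by
    intro v i j l hij hjl hi hl
    rw [mem_bagF] at *
    exact ⟨le_trans hi.1 hij, le_trans hjl hl.2⟩

lemma not_dvd_valf {k : ℕ} (a : F k) (x : List (F k)) (h0 : a.val ≠ 0) :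
    ¬ (L k + 1) ∣ valf (a :: x) := by
  intro hdvd
  have hmod : valf (a :: x) % (L k + 1) = a.val := by
    show (valf x * (L k + 1) + a.val) % (L k + 1) = a.val
    rw [Nat.mul_comm (valf x) (L k + 1), Nat.mul_add_mod]
    exact Nat.mod_eq_of_lt (by have := a.isLt; omega)
  rw [Nat.dvd_iff_mod_eq_zero] at hdvd
  omega

/-- key step for the bag size bound: distinct "boundary case" vertices must agree -/
lemma boundary_unique {k : ℕ} (i : ℕ) (v w : Vt k)
    (hv : i + 1 = valf (↑v : List (F k)) * Bp k (↑v : List (F k)).length)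
    (hw : i + 1 = valf (↑w : List (F k)) * Bp k (↑w : List (F k)).length)
    (hdv : ¬ (L k + 1) ∣ valf (↑v : List (F k)))
    (hdw : ¬ (L k + 1) ∣ valf (↑w : List (F k)))
    (hlen : (↑v : List (F k)).length ≤ (↑w : List (F k)).length) : v = w := by
  have hvk := v.2.2
  have hwk := w.2.2
  set jv := (↑v : List (F k)).length
  set jw := (↑w : List (F k)).length
  have hsplit : Bp k jv = (L k + 1) ^ (jw - jv) * Bp k jw := by
    rw [Bp, Bp, ← pow_add]
    congr 1
    omega
  have heq : valf (↑v : List (F k)) * ((L k + 1) ^ (jw - jv)) * Bp k jw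
      = valf (↑w : List (F k)) * Bp k jw := by
    rw [mul_assoc, ← hsplit, ← hv, hw]
  have hcancel : valf (↑v : List (F k)) * (L k + 1) ^ (jw - jv) = valf (↑w : List (F k)) :=
    Nat.eq_of_mul_eq_mul_right (Bp_pos _ _) heq
  have hjj : jv = jw := by
    by_contra hne
    have h1 : 1 ≤ jw - jv := by omega
    have : (L k + 1) ∣ valf (↑w : List (F k)) := by
      rw [← hcancel]
      exact Dvd.dvd.mul_left (dvd_pow_self _ (by omega)) _
    exact hdw this
  apply Subtype.ext
  apply valf_inj _ _ hjj
  rw [← hcancel, hjj]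
  simp [Nat.sub_self]

lemma bagF_card {k : ℕ} (i : ℕ) : (bagF k i).card ≤ k + 1 := by
  classical
  have hcard : (bagF k i).card ≤ (Finset.range (k + 1)).card := by
    apply Finset.card_le_card_of_injOn
      (f := fun v : Vt k => if valf (↑v : List (F k)) * Bp k (↑v : List (F k)).length ≤ i
        then (↑v : List (F k)).length else 0)
    · intro v _
      simp only [Finset.mem_coe, Finset.mem_range]
      split
      · have := v.2.2; omega
      · omega
    · intro v hv w hw heq
      rw [Finset.mem_coe, mem_bagF] at hv hw
      have hvne := v.2.1
      have hwne := w.2.1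
      have hvpos : 1 ≤ (↑v : List (F k)).length := List.length_pos_iff.mpr hvne
      have hwpos : 1 ≤ (↑w : List (F k)).length := List.length_pos_iff.mpr hwne
      simp only at heq
      by_cases hv0 : valf (↑v : List (F k)) * Bp k (↑v : List (F k)).length ≤ i
      · by_cases hw0 : valf (↑w : List (F k)) * Bp k (↑w : List (F k)).length ≤ i
        · rw [if_pos hv0, if_pos hw0] at heq
          -- same level, same value
          have hBv := Bp_pos k (↑v : List (F k)).length
          have hdivv : i / Bp k (↑v : List (F k)).length = valf (↑v : List (F k)) := by
            apply Nat.div_eq_of_lt_le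
            · rw [Nat.mul_comm] at hv0 ⊢; exact hv0
            · have := hv.2
              unfold hib at this
              have h5 : (valf (↑v : List (F k)) + 1) * Bp k (↑v : List (F k)).length
                  = valf (↑v : List (F k)) * Bp k (↑v : List (F k)).length
                    + Bp k (↑v : List (F k)).length := by ring
              rw [Nat.succ_mul] at *
              omega
          have hdivw : i / Bp k (↑w : List (F k)).length = valf (↑w : List (F k)) := by
            apply Nat.div_eq_of_lt_le
            · rw [Nat.mul_comm] at hw0 ⊢; exact hw0
            · have := hw.2
              unfold hib at this
              have hBw := Bp_pos k (↑w : List (F k)).length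
              rw [Nat.succ_mul] at *
              omega
          apply Subtype.ext
          apply valf_inj _ _ heq
          rw [← hdivv, ← hdivw, heq]
        · rw [if_pos hv0, if_neg hw0] at heq
          omega
      · by_cases hw0 : valf (↑w : List (F k)) * Bp k (↑w : List (F k)).length ≤ i
        · rw [if_neg hv0, if_pos hw0] at heq
          omega
        · -- both boundary cases
          obtain ⟨a, x, hvx⟩ := List.exists_cons_of_ne_nil hvne
          obtain ⟨b, y, hwy⟩ := List.exists_cons_of_ne_nil hwne
          have ha0 : a.val ≠ 0 := by
            intro ha
            have := hv.1
            rw [hvx, lob_eq_of_head_zero a x ha, ← hvx] at this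
            omega
          have hb0 : b.val ≠ 0 := by
            intro hb
            have := hw.1
            rw [hwy, lob_eq_of_head_zero b y hb, ← hwy] at this
            omega
          have hieqv : i + 1 = valf (↑v : List (F k)) * Bp k (↑v : List (F k)).length := by
            have := hv.1
            rw [hvx, lob_eq_of_head_ne a x ha0, ← hvx] at this
            have hpos : 1 ≤ valf (↑v : List (F k)) * Bp k (↑v : List (F k)).length := by
              have hB := Bp_pos k (↑v : List (F k)).length
              have : 1 ≤ valf (↑v : List (F k)) := by
                rw [hvx]
                show 1 ≤ valf x * (L k + 1) + a.val
                omega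
              exact Nat.one_le_iff_ne_zero.mpr (Nat.mul_ne_zero (by omega) (by omega))
            omega
          have hieqw : i + 1 = valf (↑w : List (F k)) * Bp k (↑w : List (F k)).length := by
            have := hw.1
            rw [hwy, lob_eq_of_head_ne b y hb0, ← hwy] at this
            have hpos : 1 ≤ valf (↑w : List (F k)) * Bp k (↑w : List (F k)).length := by
              have hB := Bp_pos k (↑w : List (F k)).length
              have : 1 ≤ valf (↑w : List (F k)) := by
                rw [hwy]
                show 1 ≤ valf y * (L k + 1) + b.val
                omega
              exact Nat.one_le_iff_ne_zero.mpr (Nat.mul_ne_zero (by omega) (by omega))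
            omega
          have hdv : ¬ (L k + 1) ∣ valf (↑v : List (F k)) := by
            rw [hvx]; exact not_dvd_valf a x ha0
          have hdw : ¬ (L k + 1) ∣ valf (↑w : List (F k)) := by
            rw [hwy]; exact not_dvd_valf b y hb0
          rcases le_total (↑v : List (F k)).length (↑w : List (F k)).length with hle | hle
          · exact boundary_unique i v w hieqv hieqw hdv hdw hle
          · exact (boundary_unique i w v hieqw hieqv hdw hdv hle).symm
  calc (bagF k i).card ≤ (Finset.range (k + 1)).card := hcard
    _ = k + 1 := Finset.card_range _

lemma PD_width {k : ℕ} (i : Fin ((L k + 1) ^ k)) : ((PD k).bags i).card ≤ k + 1 :=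
  bagF_card i.val


/-! ### Pathwidth lower bound -/

attribute [local instance] Classical.propDecidable

def Pset {k : ℕ} (x : List (F k)) : Set (Vt k) :=
  {w | ∃ y, y ≠ [] ∧ (↑w : List (F k)) = y ++ x}

lemma mem_Pset_length {k : ℕ} {x : List (F k)} {w : Vt k} (h : w ∈ Pset x) :
    x.length < (↑w : List (F k)).length := by
  obtain ⟨y, hy, hw⟩ := h
  have : (↑w : List (F k)).length = y.length + x.length := by rw [hw]; simp
  have : 1 ≤ y.length := List.length_pos_iff.mpr hy
  omega

/-- connected sets meet bag intervals -/
lemma lemB {V : Type} {G : SimpleGraph V} (D : PathDecomp G) (j2 : Fin D.m) :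
    ∀ {x z : V} (w : G.Walk x z),
      (∃ j, j ≤ j2 ∧ x ∈ D.bags j) → (∃ j', j2 ≤ j' ∧ z ∈ D.bags j') →
      ∃ u ∈ w.support, u ∈ D.bags j2 := by
  intro x z w
  induction w with
  | nil =>
    rintro ⟨j, hj, hx⟩ ⟨j', hj', hz⟩
    exact ⟨_, Walk.start_mem_support _, D.interval _ j j2 j' hj hj' hx hz⟩
  | @cons u v' z h p ih =>
    rintro ⟨j, hj, hx⟩ hz
    by_cases hcase : ∃ j'', j2 ≤ j'' ∧ u ∈ D.bags j''
    · obtain ⟨j'', hj'', hx''⟩ := hcase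
      exact ⟨u, Walk.start_mem_support _, D.interval u j j2 j'' hj hj'' hx hx''⟩
    · obtain ⟨mm, hum, hvm⟩ := D.edgeCover h
      have hm : mm ≤ j2 := by
        by_contra hgt
        exact hcase ⟨mm, le_of_lt (lt_of_not_ge hgt), hum⟩
      obtain ⟨u', hu', hb⟩ := ih ⟨mm, hm, hvm⟩ hz
      exact ⟨u', by rw [Walk.support_cons]; exact List.mem_cons_of_mem _ hu', hb⟩

lemma desc {k : ℕ} (z : List (F k)) (hz : z ≠ []) (hzk : z.length ≤ k) :
    ∀ (n : ℕ) (w : Vt k), rk (↑w : List (F k)) ≤ n → (∃ y, (↑w : List (F k)) = y ++ z) →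
      ∃ p : (Tk k).Walk w ⟨z, hz, hzk⟩, ∀ u ∈ p.support, ∃ y, (↑u : List (F k)) = y ++ z := by
  intro n
  induction n with
  | zero => intro w hn _; exact absurd (rk_pos w) (by omega)
  | succ n ih =>
    rintro w hn ⟨y, hy⟩
    by_cases heq : (↑w : List (F k)) = z
    · have hw : w = ⟨z, hz, hzk⟩ := Subtype.ext heq
      subst hw
      refine ⟨Walk.nil, ?_⟩
      intro u hu
      rw [Walk.support_nil, List.mem_singleton] at hu
      subst hu
      exact ⟨[], by simp⟩
    · have hyne : y ≠ [] := by
        rintro rfl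
        exact heq (by simpa using hy)
      obtain ⟨c, y₂, rfl⟩ := List.exists_cons_of_ne_nil hyne
      have hwrt : (↑w : List (F k)) ≠ rt k := by
        intro hr
        rw [hy] at hr
        have hlen := congrArg List.length hr
        rw [List.length_append, List.length_cons, rt, List.length_singleton] at hlen
        exact hz (List.length_eq_zero_iff.mp (by omega))
      have hpar : ∃ y', par (↑w : List (F k)) = y' ++ z := by
        rw [hy]
        by_cases h0 : c.val = 0
        · exact ⟨y₂, by simp [par, h0]⟩
        · exact ⟨⟨c.val - 1, by have := c.isLt; omega⟩ :: y₂, by simp [par, h0]⟩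
      obtain ⟨y', hy'⟩ := hpar
      have hrk := rk_par (↑w : List (F k)) w.2.1
      obtain ⟨p, hp⟩ := ih (parV w hwrt) (by show rk (par (↑w : List (F k))) ≤ n; omega) ⟨y', hy'⟩
      refine ⟨Walk.cons (adj_parV w hwrt) p, ?_⟩
      intro u hu
      rw [Walk.support_cons] at hu
      rcases List.mem_cons.mp hu with rfl | hu
      · exact ⟨c :: y₂, hy⟩
      · exact hp u hu

lemma desc' {k : ℕ} (z : List (F k)) (hzk : z.length + 1 ≤ k) :
    ∀ (n : ℕ) (w : Vt k), rk (↑w : List (F k)) ≤ n → (∃ y, y ≠ [] ∧ (↑w : List (F k)) = y ++ z) →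
      ∃ p : (Tk k).Walk w ⟨f0 k :: z, by simp, by simpa using hzk⟩,
        ∀ u ∈ p.support, ∃ y, y ≠ [] ∧ (↑u : List (F k)) = y ++ z := by
  intro n
  induction n with
  | zero => intro w hn _; exact absurd (rk_pos w) (by omega)
  | succ n ih =>
    rintro w hn ⟨y, hyne, hy⟩
    obtain ⟨c, y₂, rfl⟩ := List.exists_cons_of_ne_nil hyne
    by_cases heq : c.val = 0 ∧ y₂ = []
    · have hc : c = f0 k := Fin.ext heq.1
      have hw : w = ⟨f0 k :: z, by simp, by simpa using hzk⟩ := by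
        apply Subtype.ext
        rw [hy, heq.2, hc]
        simp
      subst hw
      refine ⟨Walk.nil, ?_⟩
      intro u hu
      rw [Walk.support_nil, List.mem_singleton] at hu
      subst hu
      exact ⟨[f0 k], by simp, by simp⟩
    · have hwrt : (↑w : List (F k)) ≠ rt k := by
        intro hr
        rw [hy] at hr
        have hlen := congrArg List.length hr
        rw [List.length_append, List.length_cons, rt, List.length_singleton] at hlen
        have hy2 : y₂ = [] := List.length_eq_zero_iff.mp (by omega)
        have hzn : z = [] := List.length_eq_zero_iff.mp (by omega)
        rw [hy2, hzn] at hr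
        simp [rt] at hr
        exact heq ⟨by rw [hr]; rfl, hy2⟩
      have hpar : ∃ y', y' ≠ [] ∧ par (↑w : List (F k)) = y' ++ z := by
        rw [hy]
        by_cases h0 : c.val = 0
        · have hy2 : y₂ ≠ [] := fun h => heq ⟨h0, h⟩
          exact ⟨y₂, hy2, by simp [par, h0]⟩
        · exact ⟨⟨c.val - 1, by have := c.isLt; omega⟩ :: y₂, by simp, by simp [par, h0]⟩
      obtain ⟨y', hy'ne, hy'⟩ := hpar
      have hrk := rk_par (↑w : List (F k)) w.2.1
      obtain ⟨p, hp⟩ := ih (parV w hwrt) (by show rk (par (↑w : List (F k))) ≤ n; omega)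
        ⟨y', hy'ne, hy'⟩
      refine ⟨Walk.cons (adj_parV w hwrt) p, ?_⟩
      intro u hu
      rw [Walk.support_cons] at hu
      rcases List.mem_cons.mp hu with rfl | hu
      · exact ⟨c :: y₂, by simp, hy⟩
      · exact hp u hu

lemma spine {k : ℕ} (x : List (F k)) (hxk : x.length + 1 ≤ k) :
    ∀ (m : ℕ) (h2 : 2 ≤ m) (hm : m < L k),
      ∃ p : (Tk k).Walk ⟨(⟨m, hm⟩ : F k) :: x, by simp, by simpa using hxk⟩
          ⟨f2 k :: x, by simp, by simpa using hxk⟩,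
        ∀ u ∈ p.support, ∃ (y : List (F k)) (b : F k), 2 ≤ b.val ∧ (↑u : List (F k)) = y ++ b :: x := by
  intro m h2
  induction m, h2 using Nat.le_induction with
  | base =>
    intro hm
    refine ⟨Walk.nil, ?_⟩
    intro u hu
    replace hu := List.mem_singleton.mp hu
    subst hu
    exact ⟨[], ⟨2, hm⟩, by simp, by simp⟩
  | succ m h2 ih =>
    intro hm1
    have hm : m < L k := by omega
    obtain ⟨p, hp⟩ := ih hm
    have hadj : (Tk k).Adj ⟨(⟨m + 1, hm1⟩ : F k) :: x, by simp, by simpa using hxk⟩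
        ⟨(⟨m, hm⟩ : F k) :: x, by simp, by simpa using hxk⟩ := by
      apply Or.inl
      constructor
      · intro hr
        rw [rt] at hr
        injection hr with h1 h2
        have := congrArg Fin.val h1
        simp [f0] at this
      · show par ((⟨m + 1, hm1⟩ : F k) :: x) = _
        have h0 : ¬ ((⟨m + 1, hm1⟩ : F k) : ℕ) = 0 := by simp
        simp only [par, h0, if_false]
        refine congrArg (· :: x) (Fin.ext ?_)
        simp
    refine ⟨Walk.cons hadj p, ?_⟩
    intro u hu
    rw [Walk.support_cons] at hu
    rcases List.mem_cons.mp hu with rfl | hu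
    · exact ⟨[], ⟨m + 1, hm1⟩, by simp; omega, by simp⟩
    · exact hp u hu


lemma claim {k : ℕ} (hk : 1 ≤ k) (D : PathDecomp (Tk k)) :
    ∀ (p : ℕ), 1 ≤ p → p ≤ k → ∀ (x : List (F k)), x.length = k - p →
      ∃ i, p + 1 ≤ ((D.bags i).filter (· ∈ Pset x)).card := by
  intro p hp1
  induction p, hp1 using Nat.le_induction with
  | base =>
    intro _ x hx
    have hlen : x.length + 1 ≤ k := by omega
    have hadj : (Tk k).Adj ⟨f1 k :: x, by simp, by simpa using hlen⟩
        ⟨f0 k :: x, by simp, by simpa using hlen⟩ := by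
      apply Or.inl
      constructor
      · intro hr
        rw [rt] at hr
        injection hr with h1 _
        have := congrArg Fin.val h1
        simp [f0, f1] at this
      · show par (f1 k :: x) = f0 k :: x
        have h0 : ¬ ((f1 k : F k) : ℕ) = 0 := by simp [f1]
        simp only [par, h0, if_false]
        refine congrArg (· :: x) (Fin.ext ?_)
        simp [f0, f1]
    obtain ⟨i, h1, h0⟩ := D.edgeCover hadj
    refine ⟨i, ?_⟩
    have hne : (⟨f0 k :: x, by simp, by simpa using hlen⟩ : Vt k)
        ≠ ⟨f1 k :: x, by simp, by simpa using hlen⟩ := by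
      intro h
      have h2 : f0 k :: x = f1 k :: x := congrArg Subtype.val h
      injection h2 with hh _
      have := congrArg Fin.val hh
      simp [f0, f1] at this
    have hsub : ({⟨f0 k :: x, by simp, by simpa using hlen⟩,
        ⟨f1 k :: x, by simp, by simpa using hlen⟩} : Finset (Vt k))
        ⊆ (D.bags i).filter (· ∈ Pset x) := by
      intro w hw
      rw [Finset.mem_insert, Finset.mem_singleton] at hw
      rcases hw with rfl | rfl
      · exact Finset.mem_filter.mpr ⟨h0, ⟨[f0 k], by simp, rfl⟩⟩
      · exact Finset.mem_filter.mpr ⟨h1, ⟨[f1 k], by simp, rfl⟩⟩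
    calc 1 + 1 = ({⟨f0 k :: x, by simp, by simpa using hlen⟩,
        ⟨f1 k :: x, by simp, by simpa using hlen⟩} : Finset (Vt k)).card :=
          (Finset.card_pair hne).symm
      _ ≤ _ := Finset.card_le_card hsub
  | succ p hp ih =>
    intro hpk x hx
    have hpk' : p ≤ k := by omega
    have hx1 : x.length + 1 ≤ k := by omega
    have hx2 : x.length + 2 ≤ k := by omega
    set v : Vt k := ⟨f1 k :: x, by simp, by simpa using hx1⟩ with hv
    obtain ⟨e0, he0⟩ := ih hpk' (f0 k :: x) (by simp; omega)
    obtain ⟨e1, he1⟩ := ih hpk' (f1 k :: x) (by simp; omega)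
    obtain ⟨e2, he2⟩ := ih hpk' (f2 k :: x) (by simp; omega)
    set Fv : Finset (Fin D.m) := Finset.univ.filter (fun i => v ∈ D.bags i) with hFv
    have hFvne : Fv.Nonempty := by
      obtain ⟨i, hi⟩ := D.cover v
      exact ⟨i, by simp [hFv, hi]⟩
    set a := Fv.min' hFvne with ha
    set b := Fv.max' hFvne with hb
    have hva : v ∈ D.bags a := (Finset.mem_filter.mp (Fv.min'_mem hFvne)).2
    have hvb : v ∈ D.bags b := (Finset.mem_filter.mp (Fv.max'_mem hFvne)).2
    have hint : ∀ i, a ≤ i → i ≤ b → v ∈ D.bags i :=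
      fun i h1 h2 => D.interval v a i b h1 h2 hva hvb
    have hmemab : ∀ i, v ∈ D.bags i → a ≤ i ∧ i ≤ b := by
      intro i hi
      have hiF : i ∈ Fv := Finset.mem_filter.mpr ⟨Finset.mem_univ _, hi⟩
      exact ⟨Fv.min'_le i hiF, Fv.le_max' i hiF⟩
    set Q0 : Set (Vt k) := Pset (f0 k :: x) with hQ0
    set Q1 : Set (Vt k) := Pset (f1 k :: x) with hQ1
    set Q2 : Set (Vt k) := Pset (f2 k :: x) with hQ2
    set C0 : Set (Vt k) := {w | ∃ y, (↑w : List (F k)) = y ++ f0 k :: x} with hC0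
    set C2 : Set (Vt k) :=
      {w | ∃ (y : List (F k)) (c : F k), 2 ≤ c.val ∧ (↑w : List (F k)) = y ++ c :: x} with hC2
    have hQ0C0 : Q0 ⊆ C0 := by rintro w ⟨y, _, hy⟩; exact ⟨y, hy⟩
    have hQ2C2 : Q2 ⊆ C2 := by rintro w ⟨y, _, hy⟩; exact ⟨y, f2 k, by simp [f2], hy⟩
    have hC0P : C0 ⊆ Pset x := by
      rintro w ⟨y, hy⟩
      exact ⟨y ++ [f0 k], by simp, by rw [hy]; simp⟩
    have hQ1P : Q1 ⊆ Pset x := by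
      rintro w ⟨y, _, hy⟩
      exact ⟨y ++ [f1 k], by simp, by rw [hy]; simp⟩
    have hC2P : C2 ⊆ Pset x := by
      rintro w ⟨y, c, _, hy⟩
      exact ⟨y ++ [c], by simp, by rw [hy]; simp⟩
    have hQ0P : Q0 ⊆ Pset x := fun w hw => hC0P (hQ0C0 hw)
    have hQ2P : Q2 ⊆ Pset x := fun w hw => hC2P (hQ2C2 hw)
    have hvP : v ∈ Pset x := ⟨[f1 k], by simp, rfl⟩
    have hvQ : ∀ (c : F k), v ∉ Pset (c :: x) := by
      intro c hc
      have h1 := mem_Pset_length hc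
      rw [hv] at h1
      simp only [List.length_cons] at h1
      omega
    have hcoord : ∀ (y y' : List (F k)) (c c' : F k),
        y ++ c :: x = y' ++ c' :: x → c = c' := by
      intro y y' c c' h
      have hlen : y.length = y'.length := by
        have := congrArg List.length h
        simp only [List.length_append, List.length_cons] at this
        omega
      obtain ⟨_, h2⟩ := List.append_inj h hlen
      injection h2 with h3 h4
    have d01 : ∀ w, w ∈ C0 → w ∈ Q1 → False := by
      rintro w ⟨y, hy⟩ ⟨y', _, hy'⟩
      have h1 := hcoord y y' _ _ (hy.symm.trans hy')
      have := congrArg Fin.val h1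
      simp [f0, f1] at this
    have d02 : ∀ w, w ∈ C0 → w ∈ Q2 → False := by
      rintro w ⟨y, hy⟩ ⟨y', _, hy'⟩
      have h1 := hcoord y y' _ _ (hy.symm.trans hy')
      have := congrArg Fin.val h1
      simp [f0, f2] at this
    have d10 : ∀ w, w ∈ Q1 → w ∈ Q0 → False := by
      rintro w ⟨y, _, hy⟩ ⟨y', _, hy'⟩
      have h1 := hcoord y y' _ _ (hy.symm.trans hy')
      have := congrArg Fin.val h1
      simp [f0, f1] at this
    have d12 : ∀ w, w ∈ Q1 → w ∈ Q2 → False := by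
      rintro w ⟨y, _, hy⟩ ⟨y', _, hy'⟩
      have h1 := hcoord y y' _ _ (hy.symm.trans hy')
      have := congrArg Fin.val h1
      simp [f1, f2] at this
    have d20 : ∀ w, w ∈ C2 → w ∈ Q0 → False := by
      rintro w ⟨y, c, hc, hy⟩ ⟨y', _, hy'⟩
      have h1 := hcoord y y' _ _ (hy.symm.trans hy')
      have := congrArg Fin.val h1
      simp [f0] at this
      omega
    have d21 : ∀ w, w ∈ C2 → w ∈ Q1 → False := by
      rintro w ⟨y, c, hc, hy⟩ ⟨y', _, hy'⟩
      have h1 := hcoord y y' _ _ (hy.symm.trans hy')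
      have := congrArg Fin.val h1
      simp [f1] at this
      omega
    -- anchors
    have hadj0 : (Tk k).Adj v ⟨f0 k :: x, by simp, by simpa using hx1⟩ := by
      apply Or.inl
      constructor
      · intro hr
        rw [hv] at hr
        rw [rt] at hr
        injection hr with h1 _
        have := congrArg Fin.val h1
        simp [f0, f1] at this
      · rw [hv]
        show par (f1 k :: x) = f0 k :: x
        have h0 : ¬ ((f1 k : F k) : ℕ) = 0 := by simp [f1]
        simp only [par, h0, if_false]
        refine congrArg (· :: x) (Fin.ext ?_)
        simp [f0, f1]
    have ha0C : (⟨f0 k :: x, by simp, by simpa using hx1⟩ : Vt k) ∈ C0 := ⟨[], rfl⟩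
    have hconn0 : ∀ w ∈ C0, ∃ pw : (Tk k).Walk w ⟨f0 k :: x, by simp, by simpa using hx1⟩,
        ∀ u ∈ pw.support, u ∈ C0 := by
      rintro w ⟨y, hy⟩
      obtain ⟨pw, hpw⟩ := desc (f0 k :: x) (by simp) (by simpa using hx1) (rk (↑w : List (F k)))
        w le_rfl ⟨y, hy⟩
      exact ⟨pw, fun u hu => hpw u hu⟩
    have hadj1 : (Tk k).Adj v ⟨f0 k :: f1 k :: x, by simp, by simp; omega⟩ := by
      apply Or.inr
      constructor
      · intro hr
        rw [rt] at hr
        have := congrArg List.length hr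
        simp at this
      · show par (f0 k :: f1 k :: x) = ↑v
        rw [hv]
        have h0 : ((f0 k : F k) : ℕ) = 0 := rfl
        simp [par, h0]
    have hconn1 : ∀ w ∈ Q1, ∃ pw : (Tk k).Walk w ⟨f0 k :: f1 k :: x, by simp, by simp; omega⟩,
        ∀ u ∈ pw.support, u ∈ Q1 := by
      rintro w ⟨y, hyne, hy⟩
      obtain ⟨pw, hpw⟩ := desc' (f1 k :: x) (by simp; omega) (rk (↑w : List (F k)))
        w le_rfl ⟨y, hyne, hy⟩
      exact ⟨pw, fun u hu => hpw u hu⟩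
    have hadj2 : (Tk k).Adj v ⟨f2 k :: x, by simp, by simpa using hx1⟩ := by
      apply Or.inr
      constructor
      · intro hr
        rw [rt] at hr
        injection hr with h1 _
        have := congrArg Fin.val h1
        simp [f0, f2] at this
      · show par (f2 k :: x) = ↑v
        rw [hv]
        have h0 : ¬ ((f2 k : F k) : ℕ) = 0 := by simp [f2]
        simp only [par, h0, if_false]
        refine congrArg (· :: x) (Fin.ext ?_)
        simp [f1, f2]
    have hconn2 : ∀ w ∈ C2, ∃ pw : (Tk k).Walk w ⟨f2 k :: x, by simp, by simpa using hx1⟩,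
        ∀ u ∈ pw.support, u ∈ C2 := by
      rintro w ⟨y, c, hc, hy⟩
      obtain ⟨p1, hp1⟩ := desc (c :: x) (by simp) (by simpa using hx1) (rk (↑w : List (F k)))
        w le_rfl ⟨y, hy⟩
      obtain ⟨p2, hp2⟩ := spine x hx1 c.val hc c.isLt
      refine ⟨p1.append p2, ?_⟩
      intro u hu
      rw [Walk.support_append] at hu
      rcases List.mem_append.mp hu with hu | hu
      · obtain ⟨y', hy'⟩ := hp1 u hu
        exact ⟨y', c, hc, hy'⟩
      · obtain ⟨y', b', hb', hy'⟩ := hp2 u (List.mem_of_mem_tail hu)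
        exact ⟨y', b', hb', hy'⟩
    -- helpers
    have hmid : ∀ (Q : Set (Vt k)) (e : Fin D.m), Q ⊆ Pset x → v ∉ Q →
        p + 1 ≤ ((D.bags e).filter (· ∈ Q)).card → v ∈ D.bags e →
        ∃ i, p + 1 + 1 ≤ ((D.bags i).filter (· ∈ Pset x)).card := by
      intro Q e hQP hvQ' hcard hve
      refine ⟨e, ?_⟩
      have hvnot : v ∉ (D.bags e).filter (· ∈ Q) := by
        intro h; exact hvQ' (Finset.mem_filter.mp h).2
      have hsub : insert v ((D.bags e).filter (· ∈ Q)) ⊆ (D.bags e).filter (· ∈ Pset x) := by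
        intro w hw
        rcases Finset.mem_insert.mp hw with rfl | hw
        · exact Finset.mem_filter.mpr ⟨hve, hvP⟩
        · have := Finset.mem_filter.mp hw
          exact Finset.mem_filter.mpr ⟨this.1, hQP this.2⟩
      calc p + 1 + 1 ≤ ((D.bags e).filter (· ∈ Q)).card + 1 := by omega
        _ = (insert v ((D.bags e).filter (· ∈ Q))).card :=
            (Finset.card_insert_of_notMem hvnot).symm
        _ ≤ _ := Finset.card_le_card hsub
    have hinner : ∀ (Ca Qa Qb : Set (Vt k)) (anc : Vt k) (ea eb : Fin D.m),
        Qa ⊆ Ca → Ca ⊆ Pset x → Qb ⊆ Pset x → (∀ w, w ∈ Ca → w ∈ Qb → False) →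
        (Tk k).Adj v anc →
        (∀ w ∈ Ca, ∃ pw : (Tk k).Walk w anc, ∀ u ∈ pw.support, u ∈ Ca) →
        p + 1 ≤ ((D.bags ea).filter (· ∈ Qa)).card →
        p + 1 ≤ ((D.bags eb).filter (· ∈ Qb)).card →
        ((eb < a ∧ ea ≤ eb) ∨ (b < eb ∧ eb ≤ ea)) →
        ∃ i, p + 1 + 1 ≤ ((D.bags i).filter (· ∈ Pset x)).card := by
      intro Ca Qa Qb anc ea eb hQaCa hCaP hQbP hdisj hadjv hconn hca hcb hside
      have hnee : ((D.bags ea).filter (· ∈ Qa)).Nonempty := Finset.card_pos.mp (by omega)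
      obtain ⟨w0, hw0⟩ := hnee
      have hw0bag := (Finset.mem_filter.mp hw0).1
      have hw0Qa := (Finset.mem_filter.mp hw0).2
      obtain ⟨pw, hpw⟩ := hconn w0 (hQaCa hw0Qa)
      obtain ⟨mm, hvm, hanm⟩ := D.edgeCover hadjv
      obtain ⟨ham1, ham2⟩ := hmemab mm hvm
      have hex : ∃ u, u ∈ Ca ∧ u ∈ D.bags eb := by
        rcases hside with ⟨hs1, hs2⟩ | ⟨hs1, hs2⟩
        · obtain ⟨u, hus, hub⟩ := lemB D eb pw ⟨ea, hs2, hw0bag⟩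
            ⟨mm, le_trans (le_of_lt hs1) ham1, hanm⟩
          exact ⟨u, hpw u hus, hub⟩
        · obtain ⟨u, hus, hub⟩ := lemB D eb pw.reverse
            ⟨mm, le_trans ham2 (le_of_lt hs1), hanm⟩ ⟨ea, hs2, hw0bag⟩
          rw [Walk.support_reverse, List.mem_reverse] at hus
          exact ⟨u, hpw u hus, hub⟩
      obtain ⟨u, huCa, hub⟩ := hex
      refine ⟨eb, ?_⟩
      have hunot : u ∉ (D.bags eb).filter (· ∈ Qb) := by
        intro h
        exact hdisj u huCa (Finset.mem_filter.mp h).2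
      have hsub : insert u ((D.bags eb).filter (· ∈ Qb)) ⊆ (D.bags eb).filter (· ∈ Pset x) := by
        intro w hw
        rcases Finset.mem_insert.mp hw with rfl | hw
        · exact Finset.mem_filter.mpr ⟨hub, hCaP huCa⟩
        · have := Finset.mem_filter.mp hw
          exact Finset.mem_filter.mpr ⟨this.1, hQbP this.2⟩
      calc p + 1 + 1 ≤ ((D.bags eb).filter (· ∈ Qb)).card + 1 := by omega
        _ = _ := (Finset.card_insert_of_notMem hunot).symm
        _ ≤ _ := Finset.card_le_card hsub
    -- case analysis
    by_cases hm0 : a ≤ e0 ∧ e0 ≤ b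
    · exact hmid Q0 e0 hQ0P (hvQ _) he0 (hint e0 hm0.1 hm0.2)
    by_cases hm1 : a ≤ e1 ∧ e1 ≤ b
    · exact hmid Q1 e1 hQ1P (hvQ _) he1 (hint e1 hm1.1 hm1.2)
    by_cases hm2 : a ≤ e2 ∧ e2 ≤ b
    · exact hmid Q2 e2 hQ2P (hvQ _) he2 (hint e2 hm2.1 hm2.2)
    have hs0 : e0 < a ∨ b < e0 := by
      rcases not_and_or.mp hm0 with h | h
      · exact Or.inl (lt_of_not_ge h)
      · exact Or.inr (lt_of_not_ge h)
    have hs1 : e1 < a ∨ b < e1 := by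
      rcases not_and_or.mp hm1 with h | h
      · exact Or.inl (lt_of_not_ge h)
      · exact Or.inr (lt_of_not_ge h)
    have hs2 : e2 < a ∨ b < e2 := by
      rcases not_and_or.mp hm2 with h | h
      · exact Or.inl (lt_of_not_ge h)
      · exact Or.inr (lt_of_not_ge h)
    rcases hs0 with h0 | h0 <;> rcases hs1 with h1 | h1 <;> rcases hs2 with h2 | h2
    · -- LLL : pair (0,1) left
      rcases le_total e0 e1 with h | h
      · exact hinner C0 Q0 Q1 _ e0 e1 hQ0C0 hC0P hQ1P d01 hadj0 hconn0 he0 he1 (Or.inl ⟨h1, h⟩)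
      · exact hinner Q1 Q1 Q0 _ e1 e0 (fun _ h => h) hQ1P hQ0P d10 hadj1 hconn1 he1 he0
          (Or.inl ⟨h0, h⟩)
    · -- LLR : pair (0,1) left
      rcases le_total e0 e1 with h | h
      · exact hinner C0 Q0 Q1 _ e0 e1 hQ0C0 hC0P hQ1P d01 hadj0 hconn0 he0 he1 (Or.inl ⟨h1, h⟩)
      · exact hinner Q1 Q1 Q0 _ e1 e0 (fun _ h => h) hQ1P hQ0P d10 hadj1 hconn1 he1 he0
          (Or.inl ⟨h0, h⟩)
    · -- LRL : pair (0,2) left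
      rcases le_total e0 e2 with h | h
      · exact hinner C0 Q0 Q2 _ e0 e2 hQ0C0 hC0P hQ2P d02 hadj0 hconn0 he0 he2 (Or.inl ⟨h2, h⟩)
      · exact hinner C2 Q2 Q0 _ e2 e0 hQ2C2 hC2P hQ0P d20 hadj2 hconn2 he2 he0 (Or.inl ⟨h0, h⟩)
    · -- LRR : pair (1,2) right
      rcases le_total e1 e2 with h | h
      · exact hinner C2 Q2 Q1 _ e2 e1 hQ2C2 hC2P hQ1P d21 hadj2 hconn2 he2 he1 (Or.inr ⟨h1, h⟩)
      · exact hinner Q1 Q1 Q2 _ e1 e2 (fun _ h => h) hQ1P hQ2P d12 hadj1 hconn1 he1 he2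
          (Or.inr ⟨h2, h⟩)
    · -- RLL : pair (1,2) left
      rcases le_total e1 e2 with h | h
      · exact hinner Q1 Q1 Q2 _ e1 e2 (fun _ h => h) hQ1P hQ2P d12 hadj1 hconn1 he1 he2
          (Or.inl ⟨h2, h⟩)
      · exact hinner C2 Q2 Q1 _ e2 e1 hQ2C2 hC2P hQ1P d21 hadj2 hconn2 he2 he1 (Or.inl ⟨h1, h⟩)
    · -- RLR : pair (0,2) right
      rcases le_total e0 e2 with h | h
      · exact hinner C2 Q2 Q0 _ e2 e0 hQ2C2 hC2P hQ0P d20 hadj2 hconn2 he2 he0 (Or.inr ⟨h0, h⟩)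
      · exact hinner C0 Q0 Q2 _ e0 e2 hQ0C0 hC0P hQ2P d02 hadj0 hconn0 he0 he2 (Or.inr ⟨h2, h⟩)
    · -- RRL : pair (0,1) right
      rcases le_total e0 e1 with h | h
      · exact hinner Q1 Q1 Q0 _ e1 e0 (fun _ h => h) hQ1P hQ0P d10 hadj1 hconn1 he1 he0
          (Or.inr ⟨h0, h⟩)
      · exact hinner C0 Q0 Q1 _ e0 e1 hQ0C0 hC0P hQ1P d01 hadj0 hconn0 he0 he1 (Or.inr ⟨h1, h⟩)
    · -- RRR : pair (0,1) right
      rcases le_total e0 e1 with h | h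
      · exact hinner Q1 Q1 Q0 _ e1 e0 (fun _ h => h) hQ1P hQ0P d10 hadj1 hconn1 he1 he0
          (Or.inr ⟨h0, h⟩)
      · exact hinner C0 Q0 Q1 _ e0 e1 hQ0C0 hC0P hQ1P d01 hadj0 hconn0 he0 he1 (Or.inr ⟨h1, h⟩)

lemma pw_lower {k : ℕ} (hk : 1 ≤ k) (D : PathDecomp (Tk k)) :
    ∃ i, k + 1 ≤ (D.bags i).card := by
  obtain ⟨i, hi⟩ := claim hk D k hk le_rfl [] (by simp)
  exact ⟨i, le_trans hi (Finset.card_le_card (Finset.filter_subset _ _))⟩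

lemma pathwidth_Tk {k : ℕ} (hk : 1 ≤ k) : pathwidth (Tk k) = k := by
  apply le_antisymm
  · apply Nat.sInf_le
    exact ⟨PD k, fun i => PD_width i⟩
  · have hks : k ∈ { w | ∃ D : PathDecomp (Tk k), ∀ i, (D.bags i).card ≤ w + 1 } :=
      ⟨PD k, fun i => PD_width i⟩
    apply le_csInf ⟨k, hks⟩
    intro w hw
    obtain ⟨D, hD⟩ := hw
    obtain ⟨i, hi⟩ := pw_lower hk D
    have := hD i
    omega


/-! ### The direction oracle and the counting lower bound -/

section Oracle

variable {W : Type} (T : SimpleGraph W)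

lemma dirO_self (t : W) : dirO T t t = none := by
  have h : ¬ ∃ u, T.Adj t u ∧ T.dist u t + 1 = T.dist t t := by
    rintro ⟨u, _, h⟩
    rw [SimpleGraph.dist_self] at h
    omega
  simp only [dirO]
  rw [dif_neg h]

lemma dirO_shape (t v : W) :
    dirO T t v = none ∨ ∃ u, T.Adj v u ∧ dirO T t v = some u := by
  by_cases h : ∃ u, T.Adj v u ∧ T.dist u t + 1 = T.dist v t
  · right
    exact ⟨h.choose, h.choose_spec.1, by simp only [dirO]; rw [dif_pos h]⟩
  · left
    simp only [dirO]
    rw [dif_neg h]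

lemma dirO_of_ne (hc : T.Connected) {t v : W} (h : v ≠ t) :
    ∃ u, T.Adj v u ∧ dirO T t v = some u := by
  have hex : ∃ u, T.Adj v u ∧ T.dist u t + 1 = T.dist v t := by
    have hd0 : T.dist v t ≠ 0 := Nat.pos_iff_ne_zero.mp (hc.pos_dist_of_ne h)
    obtain ⟨p, hp⟩ := (hc.preconnected v t).exists_walk_length_eq_dist
    cases p with
    | nil => exact absurd rfl h
    | cons hadj q =>
      rename_i u'
      rw [Walk.length_cons] at hp
      have h1 : T.dist u' t ≤ q.length := SimpleGraph.dist_le q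
      have h2 : T.dist v t ≤ T.dist v u' + T.dist u' t := hc.dist_triangle
      have h3 : T.dist v u' ≤ 1 := by
        have := SimpleGraph.dist_le (Walk.cons hadj Walk.nil)
        simpa using this
      exact ⟨u', hadj, by omega⟩
  exact ⟨hex.choose, hex.choose_spec.1, by simp only [dirO]; rw [dif_pos hex]⟩

lemma count_le {W : Type} [Fintype W] [DecidableEq W] {T : SimpleGraph W}
    (hc : T.Connected) (e : W → Option W → Fin 4)
    (he1 : ∀ v u u', T.Adj v u → T.Adj v u' → e v (some u) = e v (some u') → u = u')
    (he0 : ∀ v u, T.Adj v u → e v (some u) ≠ e v none)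
    (σ : Strategy W) (hσ : CorrectOn T σ Set.univ) (c : ℕ) :
    (Finset.univ.filter fun t => costOf T σ t ≤ c).card ≤ 4 ^ c := by
  classical
  have hinj : Set.InjOn (fun t => fun i : Fin c =>
      e (queryAt T σ t i.val) (dirO T t (queryAt T σ t i.val)))
      {t | costOf T σ t ≤ c} := by
    intro t ht t' ht' heq
    simp only [Set.mem_setOf_eq] at ht ht'
    have hist_eq : ∀ n, n ≤ c → histRun T σ t n = histRun T σ t' n := by
      intro n
      induction n with
      | zero => intro _; rfl
      | succ n ihn =>
        intro hn
        have hh := ihn (by omega)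
        have hqq : queryAt T σ t n = queryAt T σ t' n := by
          unfold queryAt; rw [hh]
        have hF := congrFun heq ⟨n, by omega⟩
        simp only at hF
        rw [hqq] at hF
        have hd : dirO T t (queryAt T σ t' n) = dirO T t' (queryAt T σ t' n) := by
          rcases dirO_shape T t (queryAt T σ t' n) with h1 | ⟨u, hu, h1⟩ <;>
            rcases dirO_shape T t' (queryAt T σ t' n) with h2 | ⟨u', hu', h2⟩
          · rw [h1, h2]
          · rw [h1, h2] at hF ⊢
            exact absurd hF.symm (he0 _ u' hu')
          · rw [h1, h2] at hF ⊢
            exact absurd hF (he0 _ u hu)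
          · rw [h1, h2] at hF ⊢
            rw [he1 _ u u' hu hu' hF]
        show histRun T σ t n ++ [(queryAt T σ t n, dirO T t (queryAt T σ t n))]
            = histRun T σ t' n ++ [(queryAt T σ t' n, dirO T t' (queryAt T σ t' n))]
        rw [hh, hqq, hd]
    set n₀ := sInf {n | queryAt T σ t n = t} with hn₀
    have hmem : queryAt T σ t n₀ = t := Nat.sInf_mem (hσ t trivial)
    have hn₀c : n₀ < c := by
      have hco : costOf T σ t = n₀ + 1 := rfl
      omega
    have hq : queryAt T σ t' n₀ = t := by
      unfold queryAt
      rw [← hist_eq n₀ (by omega)]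
      exact hmem
    by_contra hne
    have hF := congrFun heq ⟨n₀, hn₀c⟩
    simp only at hF
    rw [hmem, hq] at hF
    rw [dirO_self] at hF
    obtain ⟨u, hu, hd⟩ := dirO_of_ne T hc (show t ≠ t' from hne)
    rw [hd] at hF
    exact he0 t u hu hF.symm
  calc (Finset.univ.filter fun t => costOf T σ t ≤ c).card
      ≤ (Finset.univ : Finset (Fin c → Fin 4)).card := by
        apply Finset.card_le_card_of_injOn
          (fun t => fun i : Fin c => e (queryAt T σ t i.val) (dirO T t (queryAt T σ t i.val)))
          (fun _ _ => Finset.mem_univ _)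
        intro t1 h1 t2 h2 hh
        have h1' := (Finset.mem_filter.mp h1).2
        have h2' := (Finset.mem_filter.mp h2).2
        exact hinj h1' h2' hh
    _ = 4 ^ c := by simp

end Oracle

/-! ### encoder for our tree -/

def enc (k : ℕ) : Vt k → Option (Vt k) → Fin 4 := fun v o =>
  match o with
  | none => 0
  | some u =>
      if (↑u : List (F k)) = par (↑v : List (F k)) then 1
      else if (↑u : List (F k)) = f0 k :: (↑v : List (F k)) then 2 else 3

lemma third_child {k : ℕ} {v u u' : Vt k}
    (hu : par (↑u : List (F k)) = ↑v) (hu' : par (↑u' : List (F k)) = ↑v)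
    (h2 : (↑u : List (F k)) ≠ f0 k :: (↑v : List (F k)))
    (h2' : (↑u' : List (F k)) ≠ f0 k :: (↑v : List (F k))) : u = u' := by
  obtain ⟨b, y, hb⟩ := List.exists_cons_of_ne_nil u.2.1
  obtain ⟨b', y', hb'⟩ := List.exists_cons_of_ne_nil u'.2.1
  have hbne : b.val ≠ 0 := by
    intro h0
    apply h2
    rw [hb] at hu ⊢
    simp only [par, h0, if_true, eq_self_iff_true] at hu
    rw [hu]
    congr 1
    exact (Fin.ext h0 : b = f0 k)
  have hbne' : b'.val ≠ 0 := by
    intro h0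
    apply h2'
    rw [hb'] at hu' ⊢
    simp only [par, h0, if_true, eq_self_iff_true] at hu'
    rw [hu']
    congr 1
    exact (Fin.ext h0 : b' = f0 k)
  rw [hb] at hu
  rw [hb'] at hu'
  simp only [par, hbne, hbne', if_false] at hu hu'
  have hvv := hu.trans hu'.symm
  injection hvv with hc1 hc2
  have hcc := congrArg Fin.val hc1
  simp only at hcc
  apply Subtype.ext
  rw [hb, hb', hc2]
  congr 1
  apply Fin.ext
  omega

lemma enc_inj {k : ℕ} : ∀ (v u u' : Vt k), (Tk k).Adj v u → (Tk k).Adj v u' →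
    enc k v (some u) = enc k v (some u') → u = u' := by
  intro v u u' hadj hadj' heq
  simp only [enc] at heq
  by_cases c1 : (↑u : List (F k)) = par (↑v : List (F k)) <;>
    by_cases c1' : (↑u' : List (F k)) = par (↑v : List (F k))
  · exact Subtype.ext (c1.trans c1'.symm)
  · rw [if_pos c1, if_neg c1'] at heq
    by_cases c2' : (↑u' : List (F k)) = f0 k :: (↑v : List (F k))
    · rw [if_pos c2'] at heq; exact absurd heq (by decide)
    · rw [if_neg c2'] at heq; exact absurd heq (by decide)
  · rw [if_neg c1, if_pos c1'] at heq
    by_cases c2 : (↑u : List (F k)) = f0 k :: (↑v : List (F k))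
    · rw [if_pos c2] at heq; exact absurd heq (by decide)
    · rw [if_neg c2] at heq; exact absurd heq (by decide)
  · rw [if_neg c1, if_neg c1'] at heq
    by_cases c2 : (↑u : List (F k)) = f0 k :: (↑v : List (F k)) <;>
      by_cases c2' : (↑u' : List (F k)) = f0 k :: (↑v : List (F k))
    · exact Subtype.ext (c2.trans c2'.symm)
    · rw [if_pos c2, if_neg c2'] at heq; exact absurd heq (by decide)
    · rw [if_neg c2, if_pos c2'] at heq; exact absurd heq (by decide)
    · -- both are "third children": parents
      have hpu : par (↑u : List (F k)) = ↑v := by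
        rcases hadj with ⟨_, h⟩ | ⟨_, h⟩
        · exact absurd h.symm c1
        · exact h
      have hpu' : par (↑u' : List (F k)) = ↑v := by
        rcases hadj' with ⟨_, h⟩ | ⟨_, h⟩
        · exact absurd h.symm c1'
        · exact h
      exact third_child hpu hpu' c2 c2'

lemma enc_ne {k : ℕ} : ∀ (v u : Vt k), (Tk k).Adj v u → enc k v (some u) ≠ enc k v none := by
  intro v u _
  simp only [enc]
  by_cases c1 : (↑u : List (F k)) = par (↑v : List (F k))
  · rw [if_pos c1]; decide
  · rw [if_neg c1]
    by_cases c2 : (↑u : List (F k)) = f0 k :: (↑v : List (F k))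
    · rw [if_pos c2]; decide
    · rw [if_neg c2]; decide


lemma card_lb (k : ℕ) (hk : 1 ≤ k) : L k ^ k ≤ Fintype.card (Vt k) := by
  have hf : Function.Injective (fun g : Fin k → F k =>
      (⟨List.ofFn g, by
        intro h
        have := congrArg List.length h
        simp at this
        omega, by simp⟩ : Vt k)) := by
    intro g g' h
    have := congrArg Subtype.val h
    simp only at this
    exact List.ofFn_injective this
  have := Fintype.card_le_of_injective _ hf
  calc L k ^ k = Fintype.card (Fin k → F k) := by simp [Fintype.card_fun]
    _ ≤ _ := this

lemma sum_cost_lb {k : ℕ} (hk : 1 ≤ k) (σ : Strategy (Vt k))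
    (hσ : CorrectOn (Tk k) σ Set.univ) (c : ℕ) :
    (Fintype.card (Vt k) - 4 ^ c) * (c + 1) ≤ ∑ t : Vt k, costOf (Tk k) σ t := by
  classical
  have hcount := count_le (Tk_connected hk) (enc k) enc_inj enc_ne σ hσ c
  have hAB := Finset.card_filter_add_card_filter_not
    (s := (Finset.univ : Finset (Vt k))) (p := fun t => costOf (Tk k) σ t ≤ c)
  rw [Finset.card_univ] at hAB
  set B := Finset.univ.filter (fun t => ¬ costOf (Tk k) σ t ≤ c) with hB
  have hBcard : Fintype.card (Vt k) - 4 ^ c ≤ B.card := by omega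
  have h1 : B.card * (c + 1) ≤ ∑ t ∈ B, costOf (Tk k) σ t := by
    have := Finset.card_nsmul_le_sum B (fun t => costOf (Tk k) σ t) (c + 1)
      (fun t ht => by
        have h := (Finset.mem_filter.mp ht).2
        show c + 1 ≤ costOf (Tk k) σ t
        omega)
    simpa [smul_eq_mul] using this
  calc (Fintype.card (Vt k) - 4 ^ c) * (c + 1) ≤ B.card * (c + 1) :=
        Nat.mul_le_mul_right _ hBcard
    _ ≤ ∑ t ∈ B, costOf (Tk k) σ t := h1
    _ ≤ ∑ t : Vt k, costOf (Tk k) σ t := Finset.sum_le_sum_of_subset (Finset.subset_univ B)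

lemma pow_eq (k : ℕ) (hk : 1 ≤ k) : (4 : ℕ) ^ (3 * (k * k) + 3 * k - 1 + 1) = L k ^ k := by
  have h1 : 3 * (k * k) + 3 * k - 1 + 1 = 3 * (k * k) + 3 * k := by
    have : 1 ≤ 3 * k := by omega
    omega
  rw [h1, L, show (4 : ℕ) = 2 ^ 2 from rfl, ← pow_mul, ← pow_mul]
  congr 1
  ring

lemma dist_bound (k : ℕ) (hk : 1 ≤ k) (t : Vt k) :
    (Tk k).dist (rtV hk) t + 2 ≤ 2 ^ (13 * k) := by
  have h1 := dist_le_rt hk t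
  have h2 : k * L k + 2 ≤ 2 ^ (13 * k) := by
    rw [L]
    have ha : 2 ≤ 2 ^ (6 * k + 6) := by
      calc (2:ℕ) = 2 ^ 1 := rfl
        _ ≤ 2 ^ (6 * k + 6) := Nat.pow_le_pow_right (by norm_num) (by omega)
    have hb : k + 1 ≤ 2 ^ k := Nat.lt_two_pow_self
    calc k * 2 ^ (6 * k + 6) + 2 ≤ k * 2 ^ (6 * k + 6) + 2 ^ (6 * k + 6) := by omega
      _ = (k + 1) * 2 ^ (6 * k + 6) := by ring
      _ ≤ 2 ^ k * 2 ^ (6 * k + 6) := Nat.mul_le_mul_right _ hb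
      _ = 2 ^ (k + (6 * k + 6)) := (pow_add 2 _ _).symm
      _ ≤ 2 ^ (13 * k) := Nat.pow_le_pow_right (by norm_num) (by omega)
  omega

lemma logb_bound (k : ℕ) (hk : 1 ≤ k) (t : Vt k) :
    Real.logb 2 (((Tk k).dist (rtV hk) t : ℝ) + 2) ≤ 13 * (k : ℝ) := by
  have hd := dist_bound k hk t
  have hpos : (0:ℝ) < ((Tk k).dist (rtV hk) t : ℝ) + 2 := by positivity
  rw [Real.logb_le_iff_le_rpow (by norm_num) hpos]
  have : ((2:ℝ) ^ (13 * k : ℕ) : ℝ) = (2:ℝ) ^ ((13 * k : ℕ) : ℝ) :=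
    (Real.rpow_natCast 2 (13 * k)).symm
  rw [show (13 * (k:ℝ)) = ((13 * k : ℕ) : ℝ) by push_cast; ring, ← this]
  exact_mod_cast (by exact_mod_cast hd : ((Tk k).dist (rtV hk) t : ℝ) + 2 ≤ ((2 ^ (13 * k) : ℕ) : ℝ))

end PWLB

open PWLB

/-- There is a universal constant `c₀ > 0` such that for every `k ≥ 1`
there are a finite tree `T` of pathwidth exactly `k` and a prediction `s` such that every
deterministic search strategy correct on `V(T)` has a target `t` with query cost at least
`c₀ * k * log₂(dist_T(s,t) + 2)`, and likewise every zero-error randomized strategy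
(a distribution over deterministic correct strategies) has a target whose expected query
cost is at least `c₀ * k * log₂(dist_T(s,t) + 2)`. -/
theorem pathwidth_lower_bound :
    ∃ c₀ : ℝ, 0 < c₀ ∧ ∀ k : ℕ, 1 ≤ k →
      ∃ (V : Type) (_ : Fintype V) (T : SimpleGraph V) (_ : T.IsTree) (s : V),
        pathwidth T = k ∧
        (∀ σ : Strategy V, CorrectOn T σ Set.univ →
          ∃ t : V, c₀ * k * Real.logb 2 ((T.dist s t : ℝ) + 2) ≤ (costOf T σ t : ℝ)) ∧
        (∀ D : PMF (Strategy V), (∀ σ ∈ D.support, CorrectOn T σ Set.univ) →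
          ∃ t : V, ENNReal.ofReal (c₀ * k * Real.logb 2 ((T.dist s t : ℝ) + 2)) ≤
            ∑' σ : Strategy V, D σ * (costOf T σ t : ENNReal)) := by
  classical
  refine ⟨1/10, by norm_num, ?_⟩
  intro k hk
  have hk1 : (1:ℝ) ≤ (k:ℝ) := by exact_mod_cast hk
  set c : ℕ := 3 * (k * k) + 3 * k - 1 with hc
  have hc1 : c + 1 = 3 * (k * k) + 3 * k := by
    have : 1 ≤ 3 * k := by omega
    omega
  have h4N : 4 ^ c * 4 ≤ Fintype.card (Vt k) := by
    have h1 := card_lb k hk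
    have hpe := pow_eq k hk
    calc 4 ^ c * 4 = 4 ^ (c + 1) := by rw [pow_succ]
      _ = L k ^ k := hpe
      _ ≤ _ := h1
  have h4pos : 1 ≤ 4 ^ c := Nat.one_le_pow _ _ (by norm_num)
  have hlogmul : ∀ t : Vt k,
      (1/10 : ℝ) * k * Real.logb 2 (((Tk k).dist (rtV hk) t : ℝ) + 2)
        ≤ (1/10 : ℝ) * k * (13 * k) := by
    intro t
    apply mul_le_mul_of_nonneg_left (logb_bound k hk t)
    positivity
  refine ⟨Vt k, inferInstance, Tk k, Tk_isTree hk, rtV hk, pathwidth_Tk hk, ?_, ?_⟩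
  · -- deterministic lower bound
    intro σ hσ
    have hcount := count_le (Tk_connected hk) (enc k) enc_inj enc_ne σ hσ c
    have hBne : (Finset.univ.filter (fun t => ¬ costOf (Tk k) σ t ≤ c)).Nonempty := by
      rw [← Finset.card_pos]
      have hAB := Finset.card_filter_add_card_filter_not
        (s := (Finset.univ : Finset (Vt k))) (p := fun t => costOf (Tk k) σ t ≤ c)
      rw [Finset.card_univ] at hAB
      omega
    obtain ⟨t, ht⟩ := hBne
    have hcost : c + 1 ≤ costOf (Tk k) σ t := by
      have h := (Finset.mem_filter.mp ht).2
      omega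
    refine ⟨t, ?_⟩
    have hcostR : (3 * ((k:ℝ) * k) + 3 * k : ℝ) ≤ (costOf (Tk k) σ t : ℝ) := by
      have hcc : (3 * (k * k) + 3 * k : ℕ) ≤ costOf (Tk k) σ t := by omega
      exact_mod_cast hcc
    calc (1/10 : ℝ) * k * Real.logb 2 (((Tk k).dist (rtV hk) t : ℝ) + 2)
        ≤ (1/10 : ℝ) * k * (13 * k) := hlogmul t
      _ ≤ (costOf (Tk k) σ t : ℝ) := by nlinarith
  · -- randomized lower bound
    intro D hD
    by_contra hcon
    push_neg at hcon
    set N := Fintype.card (Vt k) with hN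
    set A := N - 4 ^ c with hA
    have hA1 : 1 ≤ A := by omega
    have hNA : N ≤ 2 * A := by omega
    set X := ENNReal.ofReal ((1/10 : ℝ) * k * (13 * k)) with hX
    have keyA : ((A * (c+1) : ℕ) : ENNReal)
        ≤ ∑ t : Vt k, ∑' σ, D σ * (costOf (Tk k) σ t : ENNReal) := by
      have hswap : ∑' σ, ∑ t : Vt k, D σ * (costOf (Tk k) σ t : ENNReal)
          = ∑ t : Vt k, ∑' σ, D σ * (costOf (Tk k) σ t : ENNReal) :=
        Summable.tsum_finsetSum (fun t _ => ENNReal.summable)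
      rw [← hswap]
      have hper : ∀ σ, D σ * ((A * (c+1) : ℕ) : ENNReal)
          ≤ ∑ t : Vt k, D σ * (costOf (Tk k) σ t : ENNReal) := by
        intro σ
        rw [← Finset.mul_sum]
        by_cases hs : σ ∈ D.support
        · apply mul_le_mul_right
          have hM := sum_cost_lb hk σ (hD σ hs) c
          have hcast : ((A * (c+1) : ℕ) : ENNReal)
              ≤ ((∑ t : Vt k, costOf (Tk k) σ t : ℕ) : ENNReal) := by
            exact_mod_cast hM
          calc ((A * (c+1) : ℕ) : ENNReal)
              ≤ ((∑ t : Vt k, costOf (Tk k) σ t : ℕ) : ENNReal) := hcast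
            _ = ∑ t : Vt k, (costOf (Tk k) σ t : ENNReal) := by push_cast; rfl
        · have h0 : D σ = 0 := by
            by_contra hne
            exact hs ((D.mem_support_iff σ).mpr hne)
          rw [h0, zero_mul, zero_mul]
      calc ((A * (c+1) : ℕ) : ENNReal) = 1 * ((A * (c+1) : ℕ) : ENNReal) := (one_mul _).symm
        _ = (∑' σ, D σ) * ((A * (c+1) : ℕ) : ENNReal) := by rw [D.tsum_coe]
        _ = ∑' σ, D σ * ((A * (c+1) : ℕ) : ENNReal) := ENNReal.tsum_mul_right.symm
        _ ≤ ∑' σ, ∑ t : Vt k, D σ * (costOf (Tk k) σ t : ENNReal) :=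
            ENNReal.tsum_le_tsum hper
    have keyB : ∑ t : Vt k, ∑' σ, D σ * (costOf (Tk k) σ t : ENNReal)
        ≤ (N : ENNReal) * X := by
      calc ∑ t : Vt k, ∑' σ, D σ * (costOf (Tk k) σ t : ENNReal)
          ≤ ∑ _t : Vt k, X := by
            apply Finset.sum_le_sum
            intro t _
            refine le_trans (le_of_lt (hcon t)) ?_
            rw [hX]
            exact ENNReal.ofReal_le_ofReal (hlogmul t)
        _ = (N : ENNReal) * X := by
            rw [Finset.sum_const, Finset.card_univ, nsmul_eq_mul, hN]
    have hfinal : (N : ENNReal) * X < ((A * (c+1) : ℕ) : ENNReal) := by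
      have hstep1 : (N : ENNReal) * X ≤ ((2 * A : ℕ) : ENNReal) * X :=
        mul_le_mul_left (by exact_mod_cast hNA) X
      have hX2 : (2 : ENNReal) * X < ((c + 1 : ℕ) : ENNReal) := by
        rw [hX, show (2 : ENNReal) = ENNReal.ofReal 2 by simp,
          ← ENNReal.ofReal_mul (by norm_num),
          show ((c + 1 : ℕ) : ENNReal) = ENNReal.ofReal ((c + 1 : ℕ) : ℝ) by
            rw [ENNReal.ofReal_natCast]]
        apply (ENNReal.ofReal_lt_ofReal_iff (by positivity)).mpr
        have hcr : ((c + 1 : ℕ) : ℝ) = 3 * ((k:ℝ) * k) + 3 * k := by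
          rw [hc1]; push_cast; ring
        rw [hcr]
        nlinarith
      have hAne : (A : ENNReal) ≠ 0 := by
        simp only [ne_eq, Nat.cast_eq_zero]
        omega
      have hAnt : (A : ENNReal) ≠ ⊤ := ENNReal.natCast_ne_top A
      calc (N : ENNReal) * X ≤ ((2 * A : ℕ) : ENNReal) * X := hstep1
        _ = (A : ENNReal) * ((2 : ENNReal) * X) := by push_cast; ring
        _ < (A : ENNReal) * ((c + 1 : ℕ) : ENNReal) :=
            ENNReal.mul_lt_mul_right hAne hAnt hX2
        _ = ((A * (c + 1) : ℕ) : ENNReal) := by push_cast; ring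
    exact absurd (le_trans keyA keyB) (not_le.mpr hfinal)
end
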